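/- arXiv:2008.06317 — 7 statements merged into one kernel-verified Lean document; each statement's English description precedes it below -/
import Mathlib

section
/- Let n, l, q be positive integers and let f ∈ pdsp(n,l,q). Then the real multilinear polynomial representing f has degree n; equivalently, the top Fourier coefficient is nonzero: ∑_{x ∈ {0,1}^n} (−1)^{f(x) + x_1 + x_2 + ⋯ + x_n} ≠ 0. -/
/-!
Over `ℤ`, `(-1)^(a*b) = 1 - b + b (-1)^a` and `(-1)^(⊕ᵢ mᵢ) = ∏ᵢ (1 - 2 mᵢ)` for bits, so
`(-1)^f` expands as `1 - Q + ∑_T (-2)^|T| Q ∏_{i ∈ T} mᵢ`, a combination of monomials in the `xⱼ`,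
where `Q = ∏_{p ∉ S} x_p` and `mᵢ = ∏_{j ∈ Mᵢ} xⱼ`. Against the character `(-1)^(∑ xᵢ)` a monomial
sums to `0` unless it contains every variable. As `S ≠ ∅` and the blocks `Mᵢ` are nonempty and
disjoint, only the term `T = univ` survives, and the sum equals `(-1)^n (-2)^q ≠ 0`.
-/

/-- The class `pdsp(n, l, q)`: there exist pairwise disjoint subsets
`M 1, …, M q` of `{1,…,n}`, each of size at least `q`, whose union `S` has
size `l`, such that `f x = (⊕ᵢ ∏_{j ∈ M i} x j) · ∏_{p ∉ S} x p`. -/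
def IsPdsp (n l q : ℕ) (f : (Fin n → ZMod 2) → ZMod 2) : Prop :=
  ∃ M : Fin q → Finset (Fin n),
    (∀ i j : Fin q, i ≠ j → Disjoint (M i) (M j)) ∧
    (∀ i, q ≤ (M i).card) ∧
    (Finset.univ.biUnion M).card = l ∧
    ∀ x, f x = (∑ i : Fin q, ∏ j ∈ M i, x j) *
      ∏ p ∈ (Finset.univ.biUnion M)ᶜ, x p

open Finset Function

namespace ZMod

theorem val_prod_two {α : Type*} (s : Finset α) (g : α → ZMod 2) :
    (∏ i ∈ s, g i).val = ∏ i ∈ s, (g i).val :=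
  map_prod ({ toFun := val, map_one' := rfl, map_mul' := by decide } : ZMod 2 →* ℕ) g s

theorem neg_one_pow_val_sum_two {α : Type*} (s : Finset α) (g : α → ZMod 2) :
    (-1 : ℤ) ^ (∑ i ∈ s, g i).val = (-1) ^ ∑ i ∈ s, (g i).val := by
  rw [neg_one_pow_eq_pow_mod_two (∑ i ∈ s, (g i).val), ← val_natCast, Nat.cast_sum]
  simp only [natCast_zmod_val]

theorem neg_one_pow_val_mul_two (a b : ZMod 2) :
    (-1 : ℤ) ^ (a * b).val = 1 - b.val + b.val * (-1) ^ a.val := by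
  revert a b; decide

theorem neg_one_pow_val_two (a : ZMod 2) : (-1 : ℤ) ^ a.val = 1 + -2 * a.val := by
  revert a; decide

end ZMod

section

variable {ι : Type*} [Fintype ι] [DecidableEq ι]

theorem sum_val_prod_mul_neg_one_pow (U : Finset ι) :
    ∑ x : ι → ZMod 2, ((∏ j ∈ U, x j).val : ℤ) * (-1) ^ ∑ i, (x i).val =
      if U = univ then (-1) ^ Fintype.card ι else 0 := by
  have hfactor : ∀ x : ι → ZMod 2, ((∏ j ∈ U, x j).val : ℤ) * (-1) ^ ∑ i, (x i).val =
      ∏ i, (if i ∈ U then ((x i).val : ℤ) else 1) * (-1) ^ (x i).val := by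
    intro x
    rw [prod_mul_distrib, prod_pow_eq_pow_sum, prod_ite_mem, univ_inter, ZMod.val_prod_two,
      Nat.cast_prod]
  have hcoord : ∀ i, ∑ b : ZMod 2, (if i ∈ U then (b.val : ℤ) else 1) * (-1) ^ b.val =
      if i ∈ U then -1 else 0 := by
    intro i
    split_ifs <;> decide
  rw [sum_congr rfl fun x _ => hfactor x,
    ← Fintype.prod_sum fun i (b : ZMod 2) => (if i ∈ U then (b.val : ℤ) else 1) * (-1) ^ b.val,
    prod_congr rfl fun i _ => hcoord i]
  split_ifs with hU
  · simp [hU]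
  · obtain ⟨i, -, hi⟩ := exists_of_ssubset (ssubset_univ_iff.mpr hU)
    exact prod_eq_zero (mem_univ i) (if_neg hi)

variable {κ : Type*} [Fintype κ] (M : κ → Finset ι)

theorem biUnion_union_compl_biUnion_eq_univ_iff (hdisj : Pairwise (Disjoint on M))
    (hM : ∀ i, (M i).Nonempty) (T : Finset κ) :
    T.biUnion M ∪ (univ.biUnion M)ᶜ = univ ↔ T = univ := by
  refine ⟨fun hcover => ?_, fun hT => by rw [hT, union_compl]⟩
  by_contra hT
  obtain ⟨i, -, hi⟩ := exists_of_ssubset (ssubset_univ_iff.mpr hT)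
  obtain ⟨j, hj⟩ := hM i
  have hjcover : j ∈ T.biUnion M ∪ (univ.biUnion M)ᶜ := hcover ▸ mem_univ j
  simp only [mem_union, mem_biUnion, mem_compl, mem_univ, true_and, not_exists] at hjcover
  obtain ⟨i', hi', hji'⟩ | hjS := hjcover
  · exact disjoint_left.mp (hdisj (ne_of_mem_of_not_mem hi' hi)) hji' hj
  · exact hjS i hj

theorem neg_one_pow_val_blocks (hdisj : Pairwise (Disjoint on M)) (x : ι → ZMod 2) :
    (-1 : ℤ) ^ ((∑ i, ∏ j ∈ M i, x j) * ∏ p ∈ (univ.biUnion M)ᶜ, x p).val =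
      1 - ((∏ p ∈ (univ.biUnion M)ᶜ, x p).val : ℤ) +
        ∑ T ∈ univ.powerset,
          (-2) ^ T.card * ((∏ j ∈ T.biUnion M ∪ (univ.biUnion M)ᶜ, x j).val : ℤ) := by
  have hdisjT : ∀ T : Finset κ, Disjoint (T.biUnion M) (univ.biUnion M)ᶜ := fun T =>
    disjoint_compl_right.mono_left (biUnion_subset_biUnion_of_subset_left M (subset_univ T))
  rw [ZMod.neg_one_pow_val_mul_two, ZMod.neg_one_pow_val_sum_two, ← prod_pow_eq_pow_sum,
    prod_congr rfl fun i _ => ZMod.neg_one_pow_val_two _, prod_one_add, mul_sum]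
  refine congrArg _ (sum_congr rfl fun T _ => ?_)
  simp only [ZMod.val_prod_two, Nat.cast_prod]
  rw [prod_union (hdisjT T), prod_biUnion (hdisj.set_pairwise _), prod_mul_distrib, prod_const]
  ring

theorem sum_neg_one_pow_blocks (hdisj : Pairwise (Disjoint on M)) (hM : ∀ i, (M i).Nonempty)
    (hS : (univ.biUnion M).Nonempty) :
    ∑ x : ι → ZMod 2,
        (-1 : ℤ) ^ (((∑ i, ∏ j ∈ M i, x j) * ∏ p ∈ (univ.biUnion M)ᶜ, x p).val + ∑ i, (x i).val) =
      (-1) ^ Fintype.card ι * (-2) ^ Fintype.card κ := by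
  set S := univ.biUnion M
  have hempty : (∅ : Finset ι) ≠ univ := (hS.mono (subset_univ S)).ne_empty.symm
  have hcompl : Sᶜ ≠ univ := by rwa [Ne, compl_eq_univ_iff, ← Ne, ← nonempty_iff_ne_empty]
  have hcover : ∀ T : Finset κ, T.biUnion M ∪ Sᶜ = univ ↔ T = univ :=
    biUnion_union_compl_biUnion_eq_univ_iff M hdisj hM
  calc _ = ∑ x : ι → ZMod 2, (((∏ j ∈ ∅, x j).val : ℤ) * (-1) ^ ∑ i, (x i).val
            - ((∏ j ∈ Sᶜ, x j).val : ℤ) * (-1) ^ ∑ i, (x i).val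
            + ∑ T ∈ univ.powerset, (-2) ^ T.card *
                (((∏ j ∈ T.biUnion M ∪ Sᶜ, x j).val : ℤ) * (-1) ^ ∑ i, (x i).val)) := by
        refine sum_congr rfl fun x _ => ?_
        rw [pow_add, neg_one_pow_val_blocks M hdisj, prod_empty, ZMod.val_one, Nat.cast_one,
          add_mul, sub_mul, sum_mul]
        simp only [mul_assoc]
        rfl
    _ = (if (∅ : Finset ι) = univ then (-1) ^ Fintype.card ι else 0)
          - (if Sᶜ = univ then (-1) ^ Fintype.card ι else 0)
          + ∑ T ∈ univ.powerset, (-2) ^ T.card *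
              (if T.biUnion M ∪ Sᶜ = univ then (-1) ^ Fintype.card ι else 0) := by
        rw [sum_add_distrib, sum_sub_distrib, sum_comm]
        simp only [← mul_sum, sum_val_prod_mul_neg_one_pow]
    _ = _ := by
        rw [if_neg hempty, if_neg hcompl, sum_eq_single_of_mem univ (mem_powerset_self univ)
          fun T _ hT => by rw [if_neg ((hcover T).not.mpr hT), mul_zero],
          if_pos ((hcover univ).mpr rfl), card_univ]
        ring

end

theorem stmt0_general (n l q : ℕ) (hl : 0 < l)
    (f : (Fin n → ZMod 2) → ZMod 2) (hf : IsPdsp n l q f) :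
    ∑ x : Fin n → ZMod 2, (-1 : ℤ) ^ ((f x).val + ∑ i : Fin n, (x i).val) ≠ 0 := by
  obtain ⟨M, hdisj, hcard, hS, hfx⟩ := hf
  have hM : ∀ i, (M i).Nonempty := fun i => card_pos.mp (i.pos.trans_le (hcard i))
  have hSne : (univ.biUnion M).Nonempty := card_pos.mp (hS ▸ hl)
  simp only [hfx]
  rw [sum_neg_one_pow_blocks M (fun i j hij => hdisj i j hij) hM hSne, Fintype.card_fin,
    Fintype.card_fin]
  exact mul_ne_zero (pow_ne_zero _ (by norm_num)) (pow_ne_zero _ (by norm_num))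

/-- For `f ∈ pdsp(n,l,q)`, the top Fourier coefficient is nonzero, i.e.
the real multilinear polynomial representing `f` has degree `n`. -/
theorem stmt0 (n l q : ℕ) (hn : 0 < n) (hl : 0 < l) (hq : 0 < q)
    (f : (Fin n → ZMod 2) → ZMod 2) (hf : IsPdsp n l q f) :
    ∑ x : Fin n → ZMod 2, (-1 : ℤ) ^ ((f x).val + ∑ i : Fin n, (x i).val) ≠ 0 :=
  stmt0_general n l q hl f hf
end

section
/- Let n, l, q be positive integers and let f ∈ pdsp(n,l,q). Then there exists an integer α such that wt(f) = α·2^q + (−1)^{q−1}·2^{q−1}; in particular wt(f) ≡ 2^{q−1} (mod 2^q). -/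
open Finset Function

def zmodTwoSign (a : ZMod 2) : ℤ := if a = 1 then -1 else 1

lemma zmodTwoSign_add (a b : ZMod 2) : zmodTwoSign (a + b) = zmodTwoSign a * zmodTwoSign b := by
  decide +revert

lemma zmodTwoSign_sum {ι : Type*} (s : Finset ι) (a : ι → ZMod 2) :
    zmodTwoSign (∑ i ∈ s, a i) = ∏ i ∈ s, zmodTwoSign (a i) := by
  induction s using Finset.cons_induction with
  | empty => rfl
  | cons i s hi ih => rw [sum_cons, prod_cons, zmodTwoSign_add, ih]

lemma sum_zmodTwoSign {α : Type*} [Fintype α] (F : α → ZMod 2) :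
    ∑ a, zmodTwoSign (F a) = Fintype.card α - 2 * #{a | F a = 1} := by
  have h := card_filter_add_card_filter_not (s := univ) (fun a => F a = 1)
  simp only [zmodTwoSign, sum_ite, sum_const, card_univ] at h ⊢
  push_cast [← h]
  ring

lemma zmod_two_prod_eq_one_iff {ι : Type*} (s : Finset ι) (a : ι → ZMod 2) :
    ∏ i ∈ s, a i = 1 ↔ ∀ i ∈ s, a i = 1 := by
  have h (b : ZMod 2) : b = 1 ↔ b ≠ 0 := by decide +revert
  simp only [h, prod_ne_zero_iff]

lemma sum_zmodTwoSign_prod (β : Type*) [Fintype β] [DecidableEq β] :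
    ∑ u : β → ZMod 2, zmodTwoSign (∏ b, u b) = 2 ^ Fintype.card β - 2 := by
  have h : #{u : β → ZMod 2 | ∏ b, u b = 1} = 1 :=
    card_eq_one.2 ⟨1, by ext u; simp [funext_iff]⟩
  rw [sum_zmodTwoSign, h, Fintype.card_fun, ZMod.card]
  push_cast
  ring

lemma two_mul_card_sum_prod_eq_one {ι : Type*} [Fintype ι] [DecidableEq ι] (β : ι → Type*)
    [∀ i, Fintype (β i)] [∀ i, DecidableEq (β i)] :
    2 * (#{p : (∀ i, β i → ZMod 2) | ∑ i, ∏ b, p i b = 1} : ℤ)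
      = 2 ^ (∑ i, Fintype.card (β i)) - ∏ i, (2 ^ Fintype.card (β i) - 2) := by
  have hsum : ∑ p : (∀ i, β i → ZMod 2), zmodTwoSign (∑ i, ∏ b, p i b)
      = ∏ i, (2 ^ Fintype.card (β i) - 2) := by
    simp only [zmodTwoSign_sum]
    rw [← Fintype.prod_sum (fun i (u : β i → ZMod 2) => zmodTwoSign (∏ b, u b))]
    simp only [sum_zmodTwoSign_prod]
  have hcard : Fintype.card (∀ i, β i → ZMod 2) = 2 ^ (∑ i, Fintype.card (β i)) := by
    rw [Fintype.card_pi]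
    simp only [Fintype.card_fun, ZMod.card, prod_pow_eq_pow_sum]
  rw [sum_zmodTwoSign, hcard] at hsum
  push_cast at hsum
  linarith

section Blocks

variable {ι κ R : Type*} [One R] {M : ι → Finset κ}

lemma injective_sigma_val_of_pairwise_disjoint (hM : Pairwise (Disjoint on M)) :
    Function.Injective fun s : (Σ i, M i) => (s.2 : κ) := by
  rintro ⟨i, b, hb⟩ ⟨i', b', hb'⟩ (rfl : b = b')
  obtain rfl : i = i' := by
    by_contra hne
    exact disjoint_left.1 (hM hne) hb hb'
  rfl

lemma bijOn_restrict_blocks [Fintype ι] [DecidableEq κ] (hM : Pairwise (Disjoint on M)) :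
    Set.BijOn (fun (x : κ → R) i (b : M i) => x b)
      {x | ∀ j ∉ univ.biUnion M, x j = 1} Set.univ := by
  refine ⟨Set.mapsTo_univ _ _, fun x hx y hy hxy => funext fun j => ?_, fun p _ => ?_⟩
  · by_cases hj : j ∈ univ.biUnion M
    · obtain ⟨i, -, hji⟩ := mem_biUnion.1 hj
      exact congrFun (congrFun hxy i) ⟨j, hji⟩
    · rw [hx j hj, hy j hj]
  · refine ⟨Function.extend (fun s : (Σ i, M i) => (s.2 : κ)) (fun s => p s.1 s.2) 1,
      fun j hj => Function.extend_apply' _ _ _ ?_, ?_⟩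
    · rintro ⟨⟨i, b⟩, rfl⟩
      exact hj (mem_biUnion.2 ⟨i, mem_univ i, b.2⟩)
    · funext i b
      exact (injective_sigma_val_of_pairwise_disjoint hM).extend_apply _ _ ⟨i, b⟩

lemma card_sum_prod_mul_prod_compl_eq_one [Fintype ι] [DecidableEq ι] [Fintype κ] [DecidableEq κ]
    (hM : Pairwise (Disjoint on M)) :
    #{x : κ → ZMod 2 | (∑ i, ∏ j ∈ M i, x j) * ∏ j ∈ (univ.biUnion M)ᶜ, x j = 1}
      = #{p : (∀ i, M i → ZMod 2) | ∑ i, ∏ b, p i b = 1} := by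
  have hmul (a b : ZMod 2) : a * b = 1 ↔ a = 1 ∧ b = 1 := by decide +revert
  have hones (x : κ → ZMod 2) :
      ∏ j ∈ (univ.biUnion M)ᶜ, x j = 1 ↔ ∀ j ∉ univ.biUnion M, x j = 1 := by
    simp only [zmod_two_prod_eq_one_iff, mem_compl]
  have hbij := bijOn_restrict_blocks (R := ZMod 2) hM
  simp only [hmul, hones, ← prod_coe_sort (M _)]
  refine card_nbij (fun x i b => x b) (fun x hx => ?_) (fun x hx y hy => ?_) (fun p hp => ?_)
  · simp only [mem_coe, mem_filter, mem_univ, true_and] at hx ⊢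
    exact hx.1
  · simp only [mem_coe, mem_filter, mem_univ, true_and] at hx hy
    exact hbij.injOn hx.2 hy.2
  · obtain ⟨x, hx, rfl⟩ := hbij.surjOn (Set.mem_univ p)
    simp only [mem_coe, mem_filter, mem_univ, true_and] at hp
    exact ⟨x, by simp only [mem_coe, mem_filter, mem_univ, true_and]; exact ⟨hp, hx⟩, rfl⟩

end Blocks

lemma two_pow_succ_dvd_prod_two_pow_sub_two {ι : Type*} [Fintype ι] (m : ι → ℕ)
    (hm : ∀ i, 2 ≤ m i) :
    2 ^ (Fintype.card ι + 1) ∣ ∏ i, (2 ^ m i - 2 : ℤ) - (-2) ^ Fintype.card ι := by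
  have hfactor (i : ι) : (2 ^ m i - 2 : ℤ) = -2 * (1 - 2 ^ (m i - 1)) := by
    rw [mul_sub, mul_one, neg_mul, ← pow_succ', Nat.sub_add_cancel (by have := hm i; omega)]
    ring
  have hodd : Odd (∏ i, (1 - 2 ^ (m i - 1) : ℤ)) := by
    refine prod_induction _ Odd (fun _ _ => Odd.mul) odd_one fun i _ => odd_one.sub_even ?_
    exact (Int.even_pow' (by have := hm i; omega)).2 even_two
  obtain ⟨c, hc⟩ := hodd
  rw [prod_congr rfl fun i _ => hfactor i, prod_mul_distrib, prod_const, card_univ, hc, neg_pow]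
  exact ⟨(-1) ^ Fintype.card ι * c, by ring⟩

lemma exists_eq_mul_two_pow_add_of_two_mul_eq (q : ℕ) (m : Fin q → ℕ) (hm : ∀ i, q ≤ m i)
    (W : ℤ) (hW : 2 * W = 2 ^ (∑ i, m i) - ∏ i, (2 ^ m i - 2)) :
    ∃ α : ℤ, W = α * 2 ^ q + (-1) ^ (q - 1) * 2 ^ (q - 1) := by
  rcases q with _ | _ | k
  · exact ⟨W - 1, by simp⟩
  · refine ⟨0, ?_⟩
    rw [Fin.sum_univ_one, Fin.prod_univ_one] at hW
    norm_num
    linarith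
  · have hsum : k + 3 ≤ ∑ i, m i :=
      calc k + 3 ≤ ∑ _i : Fin (k + 2), (k + 2) := by simp; nlinarith
        _ ≤ ∑ i, m i := sum_le_sum fun i _ => hm i
    have hprod := two_pow_succ_dvd_prod_two_pow_sub_two m fun i => by have := hm i; omega
    rw [Fintype.card_fin] at hprod
    obtain ⟨α, hα⟩ := dvd_sub (pow_dvd_pow 2 hsum) hprod
    refine ⟨α, mul_left_cancel₀ two_ne_zero ?_⟩
    rw [neg_pow] at hα
    simp only [Nat.add_sub_cancel]
    linear_combination hW + hα

theorem stmt1_general (n l q : ℕ)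
    (f : (Fin n → ZMod 2) → ZMod 2) (hf : IsPdsp n l q f) :
    ∃ α : ℤ,
      ((Finset.univ.filter fun x : Fin n → ZMod 2 => f x = 1).card : ℤ)
        = α * 2 ^ q + (-1) ^ (q - 1) * 2 ^ (q - 1) := by
  obtain ⟨M, hdisj, hcard, -, hf⟩ := hf
  refine exists_eq_mul_two_pow_add_of_two_mul_eq q (fun i => (M i).card) hcard _ ?_
  simp only [hf]
  rw [card_sum_prod_mul_prod_compl_eq_one hdisj, two_mul_card_sum_prod_eq_one]
  simp only [Fintype.card_coe]

/-- For `f ∈ pdsp(n,l,q)`, there is an integer `α` with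
`wt(f) = α·2^q + (−1)^(q−1)·2^(q−1)`. -/
theorem stmt1 (n l q : ℕ) (hn : 0 < n) (hl : 0 < l) (hq : 0 < q)
    (f : (Fin n → ZMod 2) → ZMod 2) (hf : IsPdsp n l q f) :
    ∃ α : ℤ,
      ((Finset.univ.filter fun x : Fin n → ZMod 2 => f x = 1).card : ℤ)
        = α * 2 ^ q + (-1) ^ (q - 1) * 2 ^ (q - 1) :=
  stmt1_general n l q f hf
end

section
/- Let n, l, q be positive integers with q < n and let f ∈ pdsp(n,l,q). Then the integer ∑_{x ∈ {0,1}^n} (−1)^{f(x)} = 2^n − 2·wt(f) is divisible by 2^q but not by 2^{q+1}. Equivalently, the Fourier coefficient f̂(∅) = 2^{−n} ∑_{x ∈ {0,1}^n} (−1)^{f(x)} has granularity exactly n − q, i.e., 2^{n−q}·f̂(∅) is an odd integer. -/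
open Finset Function

namespace ZMod

lemma neg_one_pow_val_add (a b : ZMod 2) :
    (-1 : ℤ) ^ (a + b).val = (-1) ^ a.val * (-1) ^ b.val := by
  fin_cases a <;> fin_cases b <;> rfl

lemma neg_one_pow_val_sum {ι : Type*} (s : Finset ι) (g : ι → ZMod 2) :
    (-1 : ℤ) ^ (∑ i ∈ s, g i).val = ∏ i ∈ s, (-1 : ℤ) ^ (g i).val := by
  induction s using Finset.cons_induction with
  | empty => rfl
  | cons a s ha ih => rw [sum_cons, prod_cons, neg_one_pow_val_add, ih]

lemma neg_one_pow_val_mul (a b : ZMod 2) :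
    (-1 : ℤ) ^ (a * b).val = 1 - b.val + (-1) ^ a.val * b.val := by
  fin_cases a <;> fin_cases b <;> rfl

lemma neg_one_pow_val_eq_one_sub_two_mul (a : ZMod 2) : (-1 : ℤ) ^ a.val = 1 - 2 * a.val := by
  fin_cases a <;> rfl

lemma natCast_val_prod {ι : Type*} (s : Finset ι) (g : ι → ZMod 2) :
    ((∏ i ∈ s, g i).val : ℤ) = ∏ i ∈ s, ((g i).val : ℤ) :=
  map_prod (⟨⟨fun a : ZMod 2 => (a.val : ℤ), rfl⟩,
    fun a b => by fin_cases a <;> fin_cases b <;> rfl⟩ : ZMod 2 →* ℤ) g s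

end ZMod

lemma sum_neg_one_pow_val {α : Type*} [Fintype α] (f : α → ZMod 2) :
    ∑ x, (-1 : ℤ) ^ (f x).val = Fintype.card α - 2 * #{x | f x = 1} := by
  have h (a : ZMod 2) : (-1 : ℤ) ^ a.val = 1 - 2 * if a = 1 then 1 else 0 := by
    fin_cases a <;> rfl
  simp only [h, sum_sub_distrib, ← mul_sum, sum_boole, sum_const, card_univ, nsmul_one]

section Cube

variable {ι σ : Type*} [Fintype ι] [DecidableEq ι] [Fintype σ] [DecidableEq σ]

lemma sum_prod_val (W : Finset σ) :
    ∑ x : σ → ZMod 2, ∏ j ∈ W, ((x j).val : ℤ) = 2 ^ #Wᶜ := by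
  calc ∑ x : σ → ZMod 2, ∏ j ∈ W, ((x j).val : ℤ)
      = ∏ j, ∑ a : ZMod 2, if j ∈ W then (a.val : ℤ) else 1 := by
        rw [Fintype.prod_sum]
        simp_rw [Fintype.prod_ite_mem]
    _ = ∏ j ∈ Wᶜ, (2 : ℤ) := by
        rw [← Fintype.prod_ite_mem Wᶜ]
        refine Fintype.prod_congr _ _ fun j => ?_
        by_cases hj : j ∈ W
        · simp only [hj, if_true, mem_compl, not_true_eq_false]
          rfl
        · simp [hj]
    _ = 2 ^ #Wᶜ := prod_const 2

lemma compl_biUnion_compl_of_pairwise_disjoint {M : ι → Finset σ}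
    (hM : Pairwise (Disjoint on M)) (t : Finset ι) :
    (tᶜ.biUnion M)ᶜ = t.biUnion M ∪ (univ.biUnion M)ᶜ := by
  ext j
  simp only [mem_compl, mem_union, mem_biUnion, mem_univ, true_and, not_exists, not_and]
  constructor
  · intro h
    refine or_iff_not_imp_left.mpr fun hj i hji => ?_
    by_cases hit : i ∈ t
    exacts [hj ⟨i, hit, hji⟩, h i hit hji]
  · rintro (⟨i, hit, hji⟩ | h) i' hi't hji'
    · exact disjoint_left.mp (hM (ne_of_mem_of_not_mem hit hi't)) hji hji'
    · exact h i' hji'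

lemma sum_prod_one_sub_two_mul_prod_compl_biUnion {M : ι → Finset σ}
    (hM : Pairwise (Disjoint on M)) :
    ∑ x : σ → ZMod 2, (∏ i, (1 - 2 * ∏ j ∈ M i, ((x j).val : ℤ))) *
      ∏ p ∈ (univ.biUnion M)ᶜ, ((x p).val : ℤ) = ∏ i, ((2 : ℤ) ^ #(M i) - 2) := by
  have hexpand (x : σ → ZMod 2) :
      (∏ i, (1 - 2 * ∏ j ∈ M i, ((x j).val : ℤ))) * ∏ p ∈ (univ.biUnion M)ᶜ, ((x p).val : ℤ) =
        ∑ t : Finset ι, (∏ i ∈ t, (-2 : ℤ)) * ∏ j ∈ (tᶜ.biUnion M)ᶜ, ((x j).val : ℤ) := by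
    simp_rw [sub_eq_neg_add, ← neg_mul, Fintype.prod_add, prod_const_one, mul_one, sum_mul,
      prod_mul_distrib, mul_assoc]
    refine sum_congr rfl fun t _ => ?_
    rw [compl_biUnion_compl_of_pairwise_disjoint hM, prod_union, prod_biUnion (hM.set_pairwise _)]
    exact disjoint_compl_right.mono_left (biUnion_subset_biUnion_of_subset_left M (subset_univ t))
  calc _ = ∑ t : Finset ι, (∏ i ∈ t, (-2 : ℤ)) * 2 ^ #(tᶜ.biUnion M) := by
        simp_rw [hexpand]
        rw [sum_comm]
        simp_rw [← mul_sum, sum_prod_val, compl_compl]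
    _ = ∑ t : Finset ι, (∏ i ∈ t, (-2 : ℤ)) * ∏ i ∈ tᶜ, 2 ^ #(M i) := by
        simp_rw [card_biUnion (fun i _ j _ hij => hM hij), prod_pow_eq_pow_sum]
    _ = ∏ i, (-2 + (2 : ℤ) ^ #(M i)) := (Fintype.prod_add _ _).symm
    _ = _ := by simp_rw [neg_add_eq_sub]

theorem sum_neg_one_pow_val_sum_prod_mul_prod_compl {M : ι → Finset σ}
    (hM : Pairwise (Disjoint on M)) :
    ∑ x : σ → ZMod 2,
        (-1 : ℤ) ^ ((∑ i, ∏ j ∈ M i, x j) * ∏ p ∈ (univ.biUnion M)ᶜ, x p).val =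
      2 ^ Fintype.card σ - 2 ^ #(univ.biUnion M) + ∏ i, ((2 : ℤ) ^ #(M i) - 2) := by
  simp_rw [ZMod.neg_one_pow_val_mul, ZMod.neg_one_pow_val_sum,
    ZMod.neg_one_pow_val_eq_one_sub_two_mul, ZMod.natCast_val_prod]
  rw [sum_add_distrib, sum_sub_distrib, sum_prod_one_sub_two_mul_prod_compl_biUnion hM,
    sum_prod_val, compl_compl]
  simp

end Cube

lemma emultiplicity_two_add_two_pow_mul_odd {a K : ℤ} {q : ℕ} (ha : 2 ^ (q + 1) ∣ a)
    (hK : Odd K) : emultiplicity 2 (a + 2 ^ q * K) = q := by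
  refine emultiplicity_eq_coe.mpr
    ⟨dvd_add ((pow_dvd_pow 2 q.le_succ).trans ha) (dvd_mul_right _ _), fun h => ?_⟩
  rw [dvd_add_right ha, pow_succ, mul_dvd_mul_iff_left (by positivity)] at h
  exact Int.not_even_iff_odd.mpr hK (even_iff_two_dvd.mpr h)

lemma two_pow_sub_two_eq {m : ℕ} (hm : 1 ≤ m) : (2 : ℤ) ^ m - 2 = 2 * (2 ^ (m - 1) - 1) := by
  obtain ⟨k, rfl⟩ := Nat.exists_eq_add_of_le' hm
  rw [Nat.add_sub_cancel, pow_succ]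
  ring

lemma emultiplicity_two_pow_sub_two_pow_sum_add_prod {q n : ℕ} (m : Fin q → ℕ) (hq : 0 < q)
    (hqn : q < n) (hm : ∀ i, q ≤ m i) :
    emultiplicity 2 ((2 : ℤ) ^ n - 2 ^ ∑ i, m i + ∏ i, (2 ^ m i - 2)) = q := by
  by_cases h2 : ∀ i, 2 ≤ m i
  · have hsum : q + 1 ≤ ∑ i, m i := by
      calc q + 1 ≤ ∑ _i : Fin q, 2 := by simp; omega
        _ ≤ ∑ i, m i := sum_le_sum fun i _ => h2 i
    rw [prod_congr rfl fun i _ => two_pow_sub_two_eq (hq.trans_le (hm i)), prod_mul_distrib,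
      prod_const, card_univ, Fintype.card_fin]
    refine emultiplicity_two_add_two_pow_mul_odd
      (dvd_sub (pow_dvd_pow 2 hqn) (pow_dvd_pow 2 hsum)) ?_
    refine prod_induction _ Odd (fun _ _ => Odd.mul) odd_one fun i _ => ?_
    exact (even_two.pow_of_ne_zero (by have := h2 i; omega)).sub_odd odd_one
  · push Not at h2
    obtain ⟨i, hi⟩ := h2
    obtain rfl : q = 1 := by have := hm i; omega
    obtain rfl : i = 0 := Subsingleton.elim i 0
    have hm0 : m 0 = 1 := by have := hm 0; omega
    rw [Fin.sum_univ_one, Fin.prod_univ_one, hm0,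
      show (2 : ℤ) ^ n - 2 ^ 1 + (2 ^ 1 - 2) = 2 ^ n + 2 ^ 1 * (-1) by ring]
    exact emultiplicity_two_add_two_pow_mul_odd (pow_dvd_pow 2 hqn) (by decide)

theorem stmt2_general (n l q : ℕ) (hq : 0 < q) (hqn : q < n)
    (f : (Fin n → ZMod 2) → ZMod 2) (hf : IsPdsp n l q f) :
    (∑ x : Fin n → ZMod 2, (-1 : ℤ) ^ (f x).val
        = 2 ^ n - 2 * ((Finset.univ.filter fun x : Fin n → ZMod 2 => f x = 1).card : ℤ)) ∧
    ((2 : ℤ) ^ q ∣ ∑ x : Fin n → ZMod 2, (-1 : ℤ) ^ (f x).val) ∧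
    ¬ ((2 : ℤ) ^ (q + 1) ∣ ∑ x : Fin n → ZMod 2, (-1 : ℤ) ^ (f x).val) := by
  obtain ⟨M, hdisj, hcard, -, hf⟩ := hf
  have hM : Pairwise (Disjoint on M) := hdisj
  refine ⟨by simp [sum_neg_one_pow_val], ?_⟩
  have hsum : ∑ x : Fin n → ZMod 2, (-1 : ℤ) ^ (f x).val =
      2 ^ n - 2 ^ ∑ i, #(M i) + ∏ i, ((2 : ℤ) ^ #(M i) - 2) := by
    simp_rw [hf]
    rw [sum_neg_one_pow_val_sum_prod_mul_prod_compl hM, card_biUnion fun i _ j _ hij => hM hij,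
      Fintype.card_fin]
  rw [hsum]
  exact emultiplicity_eq_coe.mp (emultiplicity_two_pow_sub_two_pow_sum_add_prod _ hq hqn hcard)

/-- For `f ∈ pdsp(n,l,q)` with `q < n`, the integer
`∑ₓ (−1)^{f(x)} = 2^n − 2·wt(f)` is divisible by `2^q` but not by `2^(q+1)`,
i.e. `f̂(∅)` has granularity exactly `n − q`. -/
theorem stmt2 (n l q : ℕ) (hn : 0 < n) (hl : 0 < l) (hq : 0 < q) (hqn : q < n)
    (f : (Fin n → ZMod 2) → ZMod 2) (hf : IsPdsp n l q f) :
    (∑ x : Fin n → ZMod 2, (-1 : ℤ) ^ (f x).val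
        = 2 ^ n - 2 * ((Finset.univ.filter fun x : Fin n → ZMod 2 => f x = 1).card : ℤ)) ∧
    ((2 : ℤ) ^ q ∣ ∑ x : Fin n → ZMod 2, (-1 : ℤ) ^ (f x).val) ∧
    ¬ ((2 : ℤ) ^ (q + 1) ∣ ∑ x : Fin n → ZMod 2, (-1 : ℤ) ^ (f x).val) :=
  stmt2_general n l q hq hqn f hf
end

section
/- Let q ≥ 1 and let M_1,…,M_q be pairwise disjoint nonempty subsets of a finite set S whose union is S, with |M_i| ≥ q for every i. Then for every j with 0 ≤ j ≤ q, the number of assignments x ∈ {0,1}^S for which exactly j of the q monomials ∏_{r∈M_i} x_r evaluate to 1 is congruent to (−1)^{q−j}·C(q,j) modulo 2^q; in particular, for odd j it is congruent to (−1)^{q−1}·C(q,j) modulo 2^q. -/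
/-!
Because the blocks `M i` partition `S`, an assignment is an independent choice of an assignment
on each block, and the monomial of block `i` is `1` only for the all-ones assignment of that
block. So the assignments whose set of true monomials is exactly `T` number
`∏_{i ∉ T} (2^|M i| - 1)`. As `|M i| ≥ q`, each factor is `≡ -1 [MOD 2^q]`, and each of the
`C(q, j)` sets `T` of size `j` contributes `(-1)^(q - j)`.
-/

open Finset Function

lemma card_filter_eq_one_iff (γ β : Type*) [Fintype γ] [DecidableEq γ] [Fintype β]
    [DecidableEq β] [One β] (p : Prop) [Decidable p] :
    #{g : γ → β | g = 1 ↔ p} = if p then 1 else Fintype.card β ^ Fintype.card γ - 1 := by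
  split_ifs with hp
  · simp [hp, filter_eq']
  · simp [hp, filter_ne', card_univ]

section Partition

variable {ι α β : Type*}

def restrictBlocks (M : ι → Finset α) (x : α → β) : ∀ i, M i → β := fun _ r => x r

lemma restrictBlocks_bijective [Fintype ι] [DecidableEq ι] [Fintype α] [DecidableEq α]
    [Fintype β] {M : ι → Finset α} (hdisj : Pairwise (Disjoint on M))
    (hcover : univ.biUnion M = univ) :
    (restrictBlocks M : (α → β) → ∀ i, M i → β).Bijective := by
  rw [Fintype.bijective_iff_injective_and_card]
  refine ⟨fun x y h => funext fun a => ?_, ?_⟩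
  · obtain ⟨i, -, ha⟩ := mem_biUnion.1 (hcover ▸ mem_univ a)
    exact congr_fun (congr_fun h i) ⟨a, ha⟩
  · simp [Fintype.card_pi, prod_pow_eq_pow_sum,
      ← card_biUnion fun i _ j _ hij => hdisj hij, hcover]

lemma card_filter_prod_eq_one_eq [Fintype ι] [DecidableEq ι] [Fintype α] [DecidableEq α]
    [CommMonoid β] [Subsingleton βˣ] [Fintype β] [DecidableEq β] {M : ι → Finset α}
    (hdisj : Pairwise (Disjoint on M)) (hcover : univ.biUnion M = univ) (T : Finset ι) :
    #{x : α → β | ({i | ∏ r ∈ M i, x r = 1} : Finset ι) = T}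
      = ∏ i ∈ Tᶜ, (Fintype.card β ^ #(M i) - 1) := by
  rw [card_bijective _ (restrictBlocks_bijective hdisj hcover)
      (t := Fintype.piFinset fun i => {g | g = 1 ↔ i ∈ T}), Fintype.card_piFinset]
  · simp only [card_filter_eq_one_iff, Fintype.card_coe, prod_ite, filter_mem_eq_of_subset,
      subset_univ, prod_const_one, one_mul, filter_notMem_eq_sdiff, compl_eq_univ_sdiff]
  · intro x
    simp [restrictBlocks, funext_iff, Finset.ext_iff]

end Partition

lemma natCast_two_pow_sub_one_eq_neg_one {q n : ℕ} (h : q ≤ n) :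
    ((2 ^ n - 1 : ℕ) : ZMod (2 ^ q)) = -1 := by
  have h0 : ((2 ^ n : ℕ) : ZMod (2 ^ q)) = 0 :=
    (ZMod.natCast_eq_zero_iff _ _).2 (pow_dvd_pow 2 h)
  rw [Nat.cast_sub Nat.one_le_two_pow, h0, Nat.cast_one, zero_sub]

theorem stmt4_general {α : Type*} [Fintype α] [DecidableEq α] (q : ℕ)
    (M : Fin q → Finset α)
    (hdisj : ∀ i j : Fin q, i ≠ j → Disjoint (M i) (M j))
    (hcard : ∀ i, q ≤ (M i).card)
    (hcover : Finset.univ.biUnion M = Finset.univ)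
    (j : ℕ) :
    ((Finset.univ.filter fun x : α → ZMod 2 =>
        (Finset.univ.filter fun i : Fin q => ∏ r ∈ M i, x r = 1).card = j).card : ℤ)
      ≡ (-1) ^ (q - j) * (q.choose j : ℤ) [ZMOD (2 ^ q)] := by
  set ones := fun x : α → ZMod 2 => univ.filter fun i : Fin q => ∏ r ∈ M i, x r = 1
  have hcount :
      #{x | #(ones x) = j} = ∑ T ∈ powersetCard j univ, ∏ i ∈ Tᶜ, (2 ^ #(M i) - 1) := by
    rw [card_eq_sum_card_fiberwise (f := ones) (t := powersetCard j univ)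
      fun x hx => mem_powersetCard.2 ⟨subset_univ _, (mem_filter.1 hx).2⟩]
    refine sum_congr rfl fun T hT => ?_
    rw [filter_filter]
    refine Eq.trans ?_ ((card_filter_prod_eq_one_eq hdisj hcover T).trans (by rw [ZMod.card 2]))
    refine congrArg card (filter_congr fun x _ => and_iff_right_of_imp fun h => ?_)
    rw [h, (mem_powersetCard.1 hT).2]
  have hsign : ∀ T ∈ powersetCard j (univ : Finset (Fin q)),
      ∏ i ∈ Tᶜ, ((2 ^ #(M i) - 1 : ℕ) : ZMod (2 ^ q)) = (-1) ^ (q - j) := fun T hT => by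
    rw [prod_congr rfl fun i _ => natCast_two_pow_sub_one_eq_neg_one (hcard i), prod_const,
      card_compl, Fintype.card_fin, (mem_powersetCard.1 hT).2]
  rw [show (2 : ℤ) ^ q = ((2 ^ q : ℕ) : ℤ) by push_cast; rfl, ← ZMod.intCast_eq_intCast_iff,
    Int.cast_natCast, hcount, Nat.cast_sum]
  simp only [Nat.cast_prod]
  rw [sum_congr rfl hsign, sum_const, card_powersetCard, card_univ, Fintype.card_fin,
    nsmul_eq_mul]
  push_cast
  ring

/-- For pairwise disjoint nonempty subsets `M 1, …, M q` (each of size at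
least `q`) of a finite set whose union is the whole set, for every `j ≤ q`
the number of assignments for which exactly `j` of the monomials
`∏_{r ∈ M i} x r` equal `1` is congruent to `(−1)^(q−j)·C(q,j)` mod `2^q`. -/
theorem stmt4 {α : Type*} [Fintype α] [DecidableEq α] (q : ℕ) (hq : 1 ≤ q)
    (M : Fin q → Finset α)
    (hdisj : ∀ i j : Fin q, i ≠ j → Disjoint (M i) (M j))
    (hne : ∀ i, (M i).Nonempty)
    (hcard : ∀ i, q ≤ (M i).card)
    (hcover : Finset.univ.biUnion M = Finset.univ)
    (j : ℕ) (hj : j ≤ q) :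
    ((Finset.univ.filter fun x : α → ZMod 2 =>
        (Finset.univ.filter fun i : Fin q => ∏ r ∈ M i, x r = 1).card = j).card : ℤ)
      ≡ (-1) ^ (q - j) * (q.choose j : ℤ) [ZMOD (2 ^ q)] :=
  stmt4_general q M hdisj hcard hcover j
end

section
/- Let n be an even positive integer and define f_2: {0,1}^n → {0,1} by f_2(x) = (∏_{i=1}^{⌊3n/4⌋} x_i) ⊕ (∏_{j=n/2+1}^{n} x_j), where ⊕ is addition mod 2. Then every T-query quantum algorithm (with any number m of work qubits) that computes f_2 exactly satisfies T ≥ ⌊3n/4⌋. -/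
/-!
Polynomial method. Every coordinate of `Π ψ_x` is a linear combination of functions of `x`
that depend on at most `T` input bits, i.e. a polynomial of degree at most `T`. Let `xs` be
the all-ones input with its last bit set to `0`. On the subcube of inputs agreeing with `xs`
outside the first `⌊3n/4⌋` bits the second product vanishes, so `f₂` is the AND of those bits
and equals `1` only at `xs`. A coordinate of `Π ψ_x` that is nonzero at `xs` thus restricts
to a point indicator on a `⌊3n/4⌋`-dimensional subcube; its correlation with the parity of the
free bits on that subcube is nonzero, while every polynomial of smaller degree has correlation
zero, because it is invariant under flipping some free bit that negates the parity.
-/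

open Matrix

/-- Index type for the Hilbert space `ℂ^{n+1} ⊗ (ℂ²)^{⊗ m}`:
a query-register basis index in `Fin (n+1)` together with the
computational-basis values of `m` work qubits. -/
abbrev QIdx (n m : ℕ) : Type := Fin (n + 1) × (Fin m → ZMod 2)

/-- The phase oracle `O_x ⊗ I`: `e_0 ↦ e_0` and `e_i ↦ (−1)^{x_i} e_i`
for `1 ≤ i ≤ n`, acting as identity on the work qubits. -/
noncomputable def oracleMat (n m : ℕ) (x : Fin n → ZMod 2) :
    Matrix (QIdx n m) (QIdx n m) ℂ :=
  Matrix.diagonal fun p =>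
    if h : (p.1 : ℕ) = 0 then 1
    else (-1 : ℂ) ^ (x ⟨(p.1 : ℕ) - 1, by have := p.1.isLt; omega⟩).val

/-- The total evolution `U_T (O_x⊗I) U_{T−1} (O_x⊗I) ⋯ U_1 (O_x⊗I) U_0`
of a `T`-query algorithm. -/
noncomputable def algMat (n m : ℕ) (x : Fin n → ZMod 2) :
    (T : ℕ) → (Fin (T + 1) → Matrix (QIdx n m) (QIdx n m) ℂ) →
      Matrix (QIdx n m) (QIdx n m) ℂ
  | 0, U => U 0
  | T + 1, U => U (Fin.last (T + 1)) * oracleMat n m x *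
      algMat n m x T fun i => U i.castSucc

/-- The initial state `e_0 ⊗ e_0^{⊗ m}`. -/
noncomputable def initVec (n m : ℕ) : QIdx n m → ℂ :=
  fun p => if p = ((0 : Fin (n + 1)), fun _ => (0 : ZMod 2)) then 1 else 0

/-- The final state `ψ_x` of the algorithm on input `x`. -/
noncomputable def finalState (n m T : ℕ)
    (U : Fin (T + 1) → Matrix (QIdx n m) (QIdx n m) ℂ)
    (x : Fin n → ZMod 2) : QIdx n m → ℂ :=
  (algMat n m x T U).mulVec (initVec n m)

/-- There is a `T`-query exact quantum algorithm with `m` work qubits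
computing `f`: unitaries `U_0, …, U_T` and an orthogonal projection `Π`
with `Π ψ_x = ψ_x` when `f x = 1` and `Π ψ_x = 0` when `f x = 0`. -/
def ComputesExactly (n m T : ℕ) (f : (Fin n → ZMod 2) → ZMod 2) : Prop :=
  ∃ U : Fin (T + 1) → Matrix (QIdx n m) (QIdx n m) ℂ,
    (∀ i, U i ∈ Matrix.unitaryGroup (QIdx n m) ℂ) ∧
    ∃ P : Matrix (QIdx n m) (QIdx n m) ℂ,
      P.IsHermitian ∧ P * P = P ∧
        ∀ x : Fin n → ZMod 2,
          (f x = 1 → P.mulVec (finalState n m T U x) = finalState n m T U x) ∧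
          (f x = 0 → P.mulVec (finalState n m T U x) = 0)

section Junta

variable (R ι : Type*) [CommRing R]

/-- On the hypercube this is the space of multilinear polynomials of degree at most `d`. -/
def juntaSpan (d : ℕ) : Submodule R ((ι → ZMod 2) → R) :=
  Submodule.span R {g | ∃ J : Finset ι, J.card ≤ d ∧ DependsOn g (J : Set ι)}

variable {R ι}

lemma const_mem_juntaSpan (c : R) (d : ℕ) : (fun _ => c) ∈ juntaSpan R ι d :=
  Submodule.subset_span ⟨∅, Nat.zero_le d, by simpa using dependsOn_const c⟩

lemma juntaSpan_mul_le [DecidableEq ι] (a b : ℕ) :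
    juntaSpan R ι a * juntaSpan R ι b ≤ juntaSpan R ι (a + b) := by
  rw [juntaSpan, juntaSpan, Submodule.span_mul_span]
  refine Submodule.span_mono ?_
  rintro _ ⟨g, ⟨J, hJ, hg⟩, h, ⟨K, hK, hh⟩, rfl⟩
  refine ⟨J ∪ K, (Finset.card_union_le J K).trans (Nat.add_le_add hJ hK), fun x y hxy => ?_⟩
  simp only [Pi.mul_apply, Finset.coe_union, Set.mem_union] at hxy ⊢
  rw [hg fun i hi => hxy i (Or.inl hi), hh fun i hi => hxy i (Or.inr hi)]

lemma mul_mem_juntaSpan [DecidableEq ι] {a b : ℕ} {g h : (ι → ZMod 2) → R}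
    (hg : g ∈ juntaSpan R ι a) (hh : h ∈ juntaSpan R ι b) :
    g * h ∈ juntaSpan R ι (a + b) :=
  juntaSpan_mul_le a b (Submodule.mul_mem_mul hg hh)

lemma mul_apply_mem_juntaSpan [DecidableEq ι] {κ μ ν : Type*} [Fintype μ]
    {M : (ι → ZMod 2) → Matrix κ μ R} {N : (ι → ZMod 2) → Matrix μ ν R} {a b : ℕ}
    (hM : ∀ p r, (fun x => M x p r) ∈ juntaSpan R ι a)
    (hN : ∀ r q, (fun x => N x r q) ∈ juntaSpan R ι b) (p : κ) (q : ν) :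
    (fun x => (M x * N x) p q) ∈ juntaSpan R ι (a + b) := by
  simp only [Matrix.mul_apply, ← Finset.sum_fn]
  exact Submodule.sum_mem _ fun r _ => mul_mem_juntaSpan (hM p r) (hN r q)

end Junta

section Subcube

variable {R ι : Type*} [CommRing R] [DecidableEq ι] [Fintype ι]

lemma neg_one_pow_val_add_one (a : ZMod 2) : (-1 : R) ^ (a + 1).val = -(-1) ^ a.val := by
  fin_cases a
  · show (-1 : R) ^ 1 = -(-1) ^ 0
    simp
  · show (-1 : R) ^ 0 = -(-1) ^ 1
    simp

def subcubeParity (xs : ι → ZMod 2) (A : Finset ι) (x : ι → ZMod 2) : R :=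
  if ∀ i ∉ A, x i = xs i then ∏ i ∈ A, (-1) ^ (x i).val else 0

lemma subcubeParity_add_single (xs : ι → ZMod 2) {A : Finset ι} {i : ι} (hi : i ∈ A)
    (x : ι → ZMod 2) :
    subcubeParity xs A (x + Pi.single i 1) = -(subcubeParity xs A x : R) := by
  have hne : ∀ j ≠ i, (x + Pi.single i 1 : ι → ZMod 2) j = x j := fun j hj => by simp [hj]
  have hoff : ∀ j ∉ A, (x + Pi.single i 1 : ι → ZMod 2) j = x j :=
    fun j hj => hne j fun h => hj (h ▸ hi)
  by_cases hsub : ∀ j ∉ A, x j = xs j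
  · rw [subcubeParity, subcubeParity, if_pos fun j hj => (hoff j hj).trans (hsub j hj),
      if_pos hsub, ← Finset.mul_prod_erase A _ hi, ← Finset.mul_prod_erase A _ hi,
      Finset.prod_congr rfl fun j hj => by rw [hne j (Finset.ne_of_mem_erase hj)]]
    simp [neg_one_pow_val_add_one]
  · rw [subcubeParity, subcubeParity,
      if_neg fun h => hsub fun j hj => (hoff j hj).symm.trans (h j hj), if_neg hsub, neg_zero]

variable [NoZeroDivisors R] [CharZero R]

lemma sum_mul_subcubeParity_eq_zero (xs : ι → ZMod 2) {A : Finset ι} {d : ℕ}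
    (hd : d < A.card) {g : (ι → ZMod 2) → R} (hg : g ∈ juntaSpan R ι d) :
    ∑ x, g x * subcubeParity xs A x = 0 := by
  induction hg using Submodule.span_induction with
  | mem g hg =>
    obtain ⟨J, hJ, hgJ⟩ := hg
    -- flipping a coordinate of `A` outside `J` fixes `g` and negates the parity
    obtain ⟨i, hiA, hiJ⟩ := Finset.exists_mem_notMem_of_card_lt_card (hJ.trans_lt hd)
    have hflip : ∀ x, g (x + Pi.single i 1) = g x := fun x => hgJ fun j hj => by
      simp [show j ≠ i from fun h => hiJ (h ▸ hj)]
    rw [← CharZero.eq_neg_self_iff, ← Finset.sum_neg_distrib,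
      ← Equiv.sum_comp (Equiv.addRight (Pi.single i 1))]
    simp [hflip, subcubeParity_add_single xs hiA]
  | zero => simp
  | add g h _ _ hg hh => simp [add_mul, Finset.sum_add_distrib, hg, hh]
  | smul c g _ hg => simp [mul_assoc, ← Finset.mul_sum, hg]

lemma eq_zero_of_mem_juntaSpan_of_eq_zero_on_subcube {xs : ι → ZMod 2} {A : Finset ι}
    {d : ℕ} (hd : d < A.card) {g : (ι → ZMod 2) → R} (hg : g ∈ juntaSpan R ι d)
    (hzero : ∀ x ≠ xs, (∀ i ∉ A, x i = xs i) → g x = 0) : g xs = 0 := by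
  have hsum : ∑ x, g x * subcubeParity xs A x = g xs * subcubeParity xs A xs := by
    refine Finset.sum_eq_single xs (fun x _ hx => ?_) (by simp)
    by_cases hsub : ∀ i ∉ A, x i = xs i
    · rw [hzero x hx hsub, zero_mul]
    · rw [subcubeParity, if_neg hsub, mul_zero]
  have hparity : subcubeParity xs A xs ≠ (0 : R) := by
    rw [subcubeParity, if_pos fun _ _ => rfl]
    exact Finset.prod_ne_zero_iff.mpr fun _ _ => pow_ne_zero _ (neg_ne_zero.mpr one_ne_zero)
  have := sum_mul_subcubeParity_eq_zero xs hd hg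
  rw [hsum] at this
  exact (mul_eq_zero.mp this).resolve_right hparity

end Subcube

section QueryAlgorithm

variable {n m : ℕ}

lemma oracleMat_apply_mem_juntaSpan (p q : QIdx n m) :
    (fun x => oracleMat n m x p q) ∈ juntaSpan ℂ (Fin n) 1 := by
  refine Submodule.subset_span
    ⟨({i | (i : ℕ) + 1 = p.1} : Finset (Fin n)), ?_, fun x y hxy => ?_⟩
  · exact Finset.card_le_one.mpr fun i hi j hj => by
      simp only [Finset.mem_filter, Finset.mem_univ, true_and] at hi hj
      omega
  · simp only [oracleMat, Matrix.diagonal_apply]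
    split_ifs with hpq h0
    · rfl
    · rw [hxy _ (by simp; omega)]
    · rfl

lemma algMat_apply_mem_juntaSpan :
    ∀ (T : ℕ) (U : Fin (T + 1) → Matrix (QIdx n m) (QIdx n m) ℂ) (p q : QIdx n m),
      (fun x => algMat n m x T U p q) ∈ juntaSpan ℂ (Fin n) T
  | 0, U, p, q => const_mem_juntaSpan (U 0 p q) 0
  | T + 1, U, p, q => by
    have hstep := mul_apply_mem_juntaSpan (N := fun x => algMat n m x T fun i => U i.castSucc)
      (mul_apply_mem_juntaSpan (M := fun _ => U (Fin.last (T + 1)))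
        (fun p r => const_mem_juntaSpan _ 0) oracleMat_apply_mem_juntaSpan)
      (algMat_apply_mem_juntaSpan T _) p q
    rw [zero_add, add_comm] at hstep
    simpa only [algMat] using hstep

lemma oracleMat_mem_unitaryGroup (x : Fin n → ZMod 2) :
    oracleMat n m x ∈ Matrix.unitaryGroup (QIdx n m) ℂ := by
  rw [Matrix.mem_unitaryGroup_iff, oracleMat, Matrix.star_eq_conjTranspose,
    Matrix.diagonal_conjTranspose, Matrix.diagonal_mul_diagonal, ← Matrix.diagonal_one]
  congr 1
  ext p
  by_cases h0 : p.1 = 0 <;> simp [h0, ← pow_add, ← two_mul, pow_mul]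

lemma algMat_mem_unitaryGroup (x : Fin n → ZMod 2) {T : ℕ}
    {U : Fin (T + 1) → Matrix (QIdx n m) (QIdx n m) ℂ}
    (hU : ∀ i, U i ∈ Matrix.unitaryGroup (QIdx n m) ℂ) :
    algMat n m x T U ∈ Matrix.unitaryGroup (QIdx n m) ℂ := by
  induction T with
  | zero => exact hU 0
  | succ T ih => exact mul_mem (mul_mem (hU _) (oracleMat_mem_unitaryGroup x)) (ih fun _ => hU _)

lemma finalState_ne_zero {T : ℕ} {U : Fin (T + 1) → Matrix (QIdx n m) (QIdx n m) ℂ}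
    (hU : ∀ i, U i ∈ Matrix.unitaryGroup (QIdx n m) ℂ) (x : Fin n → ZMod 2) :
    finalState n m T U x ≠ 0 := by
  have hinj := Matrix.mulVec_injective_iff_isUnit.mpr
    (Unitary.isUnit_coe (U := ⟨_, algMat_mem_unitaryGroup x hU⟩))
  have hinit : initVec n m ≠ 0 := fun h => by
    simpa [initVec] using congrFun h (0, fun _ => 0)
  simpa [finalState] using hinj.ne hinit

lemma mulVec_finalState_apply_mem_juntaSpan {T : ℕ}
    (U : Fin (T + 1) → Matrix (QIdx n m) (QIdx n m) ℂ) (P : Matrix (QIdx n m) (QIdx n m) ℂ)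
    (k : QIdx n m) :
    (fun x => (P *ᵥ finalState n m T U x) k) ∈ juntaSpan ℂ (Fin n) T := by
  simp only [finalState, Matrix.mulVec_mulVec]
  simp only [Matrix.mulVec, dotProduct, ← Finset.sum_fn]
  refine Submodule.sum_mem _ fun q _ => ?_
  have hPA := mul_apply_mem_juntaSpan (M := fun _ => P)
    (fun p r => const_mem_juntaSpan _ 0) (algMat_apply_mem_juntaSpan T U) k q
  have hPAv := mul_mem_juntaSpan hPA (const_mem_juntaSpan (initVec n m q) 0)
  rwa [zero_add, add_zero] at hPAv

theorem card_le_of_computesExactly {T : ℕ} {f : (Fin n → ZMod 2) → ZMod 2}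
    (hf : ComputesExactly n m T f) {xs : Fin n → ZMod 2} {A : Finset (Fin n)} (hxs : f xs = 1)
    (hA : ∀ x ≠ xs, (∀ i ∉ A, x i = xs i) → f x = 0) : A.card ≤ T := by
  obtain ⟨U, hU, P, -, -, hP⟩ := hf
  obtain ⟨k, hk⟩ := Function.ne_iff.mp (finalState_ne_zero hU xs)
  by_contra! hT
  refine hk ?_
  have hzero := eq_zero_of_mem_juntaSpan_of_eq_zero_on_subcube hT
    (mulVec_finalState_apply_mem_juntaSpan U P k)
    fun x hx hsub => by rw [(hP x).2 (hA x hx hsub), Pi.zero_apply]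
  rwa [(hP xs).1 hxs] at hzero

end QueryAlgorithm

section Isolation

variable {ι : Type*} [DecidableEq ι] {A B : Finset ι} {j : ι}

lemma prod_add_prod_update_one (hjA : j ∉ A) (hjB : j ∈ B) :
    ∏ i ∈ A, Function.update (1 : ι → ZMod 2) j 0 i
      + ∏ i ∈ B, Function.update (1 : ι → ZMod 2) j 0 i = 1 := by
  rw [Finset.prod_eq_zero hjB (Function.update_self j _ _), add_zero]
  exact Finset.prod_eq_one fun i hi => Function.update_of_ne (by rintro rfl; exact hjA hi) _ _

lemma prod_add_prod_eq_zero_of_ne_update_one (hjA : j ∉ A) (hjB : j ∈ B)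
    {x : ι → ZMod 2} (hx : x ≠ Function.update (1 : ι → ZMod 2) j 0)
    (hxA : ∀ i ∉ A, x i = Function.update (1 : ι → ZMod 2) j 0 i) :
    ∏ i ∈ A, x i + ∏ i ∈ B, x i = 0 := by
  obtain ⟨i, hi⟩ := Function.ne_iff.mp hx
  have hiA : i ∈ A := by_contra fun h => hi (hxA i h)
  have hxi : x i = 0 := by
    rw [Function.update_of_ne (by rintro rfl; exact hjA hiA), Pi.one_apply] at hi
    exact (by decide : ∀ a : ZMod 2, a ≠ 1 → a = 0) _ hi
  rw [Finset.prod_eq_zero hiA hxi,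
    Finset.prod_eq_zero hjB (by rw [hxA j hjA, Function.update_self]), add_zero]

end Isolation

theorem stmt7_general (n : ℕ)
    (f : (Fin n → ZMod 2) → ZMod 2)
    (hf : ∀ x, f x =
        (∏ i ∈ Finset.univ.filter fun i : Fin n => (i : ℕ) < 3 * n / 4, x i)
          + ∏ i ∈ Finset.univ.filter fun i : Fin n => n / 2 ≤ (i : ℕ), x i) :
    ∀ m T : ℕ, ComputesExactly n m T f → 3 * n / 4 ≤ T := by
  intro m T hC
  obtain _ | n := n
  · exact Nat.zero_le T
  have hjA : Fin.last n ∉ Finset.univ.filter fun i : Fin (n + 1) => (i : ℕ) < 3 * (n + 1) / 4 :=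
    by simp only [Finset.mem_filter, Finset.mem_univ, true_and, Fin.val_last]; omega
  have hjB : Fin.last n ∈ Finset.univ.filter fun i : Fin (n + 1) => (n + 1) / 2 ≤ (i : ℕ) :=
    by simp only [Finset.mem_filter, Finset.mem_univ, true_and, Fin.val_last]; omega
  have hcard := card_le_of_computesExactly hC
    ((hf _).trans (prod_add_prod_update_one hjA hjB))
    fun x hx hxA => (hf x).trans (prod_add_prod_eq_zero_of_ne_update_one hjA hjB hx hxA)
  rwa [Fin.card_filter_val_lt, min_eq_right (show 3 * (n + 1) / 4 ≤ n + 1 by omega)] at hcard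

/-- For even `n`, every exact quantum algorithm computing
`f₂(x) = (∏_{i=1}^{⌊3n/4⌋} x_i) ⊕ (∏_{j=n/2+1}^{n} x_j)` makes at least
`⌊3n/4⌋` queries. -/
theorem stmt7 (n : ℕ) (hn : 0 < n) (heven : n % 2 = 0)
    (f : (Fin n → ZMod 2) → ZMod 2)
    (hf : ∀ x, f x =
        (∏ i ∈ Finset.univ.filter fun i : Fin n => (i : ℕ) < 3 * n / 4, x i)
          + ∏ i ∈ Finset.univ.filter fun i : Fin n => n / 2 ≤ (i : ℕ), x i) :
    ∀ m T : ℕ, ComputesExactly n m T f → 3 * n / 4 ≤ T :=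
  stmt7_general n f hf
end

section
/- (Untangling with one query.) Let n ≥ 4, let a, b, c, d be pairwise distinct elements of {1,…,n}, and let m ≥ 0. Then there exist unitaries A and B on ℂ^{n+1} ⊗ ℂ² ⊗ ℂ², independent of x, such that for every x ∈ {0,1}^n and all vectors W_1, W_2 ∈ (ℂ²)^{⊗m}: (B⊗I)(O_x⊗I)(A⊗I) [ (1/√2)( e_{x_a} ⊗ e_0 ⊗ e_{x_b} ⊗ W_1 + e_{x_c} ⊗ e_1 ⊗ e_{x_d} ⊗ W_2 ) ] = (−1)^{x_b} (1/√2)( e_{x_b} ⊗ e_0 ⊗ e_{x_d} ⊗ W_1 + e_{x_b} ⊗ e_1 ⊗ e_{x_d} ⊗ W_2 ), where for a bit v ∈ {0,1}, e_v denotes the standard basis vector e_0 or e_1 of ℂ^{n+1} in the first factor and of ℂ² in the other factors. -/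
/-!
The register states `e_0, e_1` encode a bit; write `f_i` for the register vector on which `O_x`
acts by `(-1)^{x_i}`. On the block where the second qubit is `0`, `A` maps `e_p` to
`((-1)^p f_a + f_d)/√2`. The oracle turns `((-1)^{x_a} f_a + f_d)/√2` into
`(-1)^{x_d} ((-1)^{x_d} f_a + f_d)/√2`, so applying `A*` leaves `(-1)^{x_d} e_{x_d}`: the single
query erases `x_a` and writes `x_d` (phase kickback). The block where the second qubit is `1`
does the same with `c, b` in place of `a, d`. Finally `B = S A*`, where `S` exchanges the register
bit with the third qubit on the first block and corrects the phase to `(-1)^{x_b}`; the factor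
`(ℂ²)^{⊗m}` is carried along untouched.
-/

open Matrix

/-- Index type for `ℂ^{n+1} ⊗ ℂ² ⊗ ℂ²`. -/
abbrev KIdx (n : ℕ) : Type := Fin (n + 1) × ZMod 2 × ZMod 2

/-- Index type for `ℂ^{n+1} ⊗ ℂ² ⊗ ℂ² ⊗ (ℂ²)^{⊗m}`. -/
abbrev JIdx (n m : ℕ) : Type := KIdx n × (Fin m → ZMod 2)

/-- The phase oracle `O_x` (tensored with the identity on the two explicit
work qubits): `e_0 ↦ e_0` and `e_i ↦ (−1)^{x_i} e_i` for `1 ≤ i ≤ n`. -/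
noncomputable def oracleK (n : ℕ) (x : Fin n → ZMod 2) :
    Matrix (KIdx n) (KIdx n) ℂ :=
  Matrix.diagonal fun k =>
    if h : (k.1 : ℕ) = 0 then 1
    else (-1 : ℂ) ^ (x ⟨(k.1 : ℕ) - 1, by have := k.1.isLt; omega⟩).val

/-- Extend a matrix on `ℂ^{n+1} ⊗ ℂ² ⊗ ℂ²` by the identity on `(ℂ²)^{⊗m}`. -/
noncomputable def extendW (n m : ℕ) (M : Matrix (KIdx n) (KIdx n) ℂ) :
    Matrix (JIdx n m) (JIdx n m) ℂ :=
  Matrix.kroneckerMap (· * ·) M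
    (1 : Matrix (Fin m → ZMod 2) (Fin m → ZMod 2) ℂ)

/-- The basis vector of `ℂ^{n+1}` indexed by a bit `v ∈ {0,1}`. -/
def bitFin (n : ℕ) (v : ZMod 2) : Fin (n + 1) :=
  ⟨v.val % (n + 1), Nat.mod_lt _ (Nat.succ_pos n)⟩

/-- The tensor `e_k ⊗ W` of a standard basis vector of
`ℂ^{n+1} ⊗ ℂ² ⊗ ℂ²` with an arbitrary vector `W` of `(ℂ²)^{⊗m}`. -/
noncomputable def etens (n m : ℕ) (k : KIdx n) (W : (Fin m → ZMod 2) → ℂ) :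
    JIdx n m → ℂ :=
  fun p => (if p.1 = k then 1 else 0) * W p.2

namespace Matrix

variable {ι κ R : Type*} [Fintype ι] [CommRing R]

theorem kroneckerMap_mul_mulVec_mul [Fintype κ] (M : Matrix ι ι R) (N : Matrix κ κ R)
    (v : ι → R) (w : κ → R) :
    kroneckerMap (· * ·) M N *ᵥ (fun p => v p.1 * w p.2)
      = fun p => (M *ᵥ v) p.1 * (N *ᵥ w) p.2 := by
  ext ⟨i, j⟩
  simp only [mulVec, dotProduct, Fintype.sum_prod_type, kroneckerMap_apply, Finset.sum_mul_sum]
  exact Finset.sum_congr rfl fun _ _ => Finset.sum_congr rfl fun _ _ => by ring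

variable [DecidableEq ι]

theorem permMatrix_mulVec_single (σ : Equiv.Perm ι) (k : ι) :
    σ.permMatrix R *ᵥ Pi.single k 1 = Pi.single (σ⁻¹ k) 1 := by
  rw [permMatrix_mulVec, Pi.single_comp_equiv]
  rfl

theorem blockDiagonal_mulVec_single [Fintype κ] [DecidableEq κ] {M : κ → Matrix ι ι R}
    {i j : ι} {k : κ} {c : R} (h : M k *ᵥ Pi.single i 1 = c • Pi.single j 1) :
    blockDiagonal M *ᵥ Pi.single (i, k) 1 = c • Pi.single (j, k) 1 := by
  ext ⟨j', k'⟩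
  have hj' := congrFun h j'
  simp only [mulVec_single_one, col_apply, Pi.smul_apply, Pi.single_apply] at hj' ⊢
  rw [blockDiagonal_apply]
  by_cases hk : k' = k
  · subst hk
    simpa using hj'
  · simp [hk]

variable [StarRing R]

theorem mem_unitaryGroup_of_orthonormal_cols {M : Matrix ι ι R}
    (hM : ∀ k l, star (M.col k) ⬝ᵥ M.col l = (1 : Matrix ι ι R) k l) :
    M ∈ unitaryGroup ι R := by
  rw [mem_unitaryGroup_iff']
  ext k l
  exact hM k l

theorem permMatrix_mem_unitaryGroup (σ : Equiv.Perm ι) :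
    σ.permMatrix R ∈ unitaryGroup ι R := by
  rw [mem_unitaryGroup_iff', star_eq_conjTranspose, conjTranspose_permMatrix, ← permMatrix_mul,
    mul_inv_cancel, permMatrix_one]

theorem diagonal_mem_unitaryGroup {d : ι → R} (hd : ∀ i, star (d i) * d i = 1) :
    diagonal d ∈ unitaryGroup ι R := by
  rw [mem_unitaryGroup_iff', star_eq_conjTranspose, diagonal_conjTranspose,
    diagonal_mul_diagonal, ← diagonal_one]
  exact congrArg diagonal (funext hd)

theorem blockDiagonal_mem_unitaryGroup [Fintype κ] [DecidableEq κ] {M : κ → Matrix ι ι R}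
    (hM : ∀ k, M k ∈ unitaryGroup ι R) : blockDiagonal M ∈ unitaryGroup (ι × κ) R := by
  simp only [mem_unitaryGroup_iff', star_eq_conjTranspose] at hM ⊢
  rw [blockDiagonal_conjTranspose, ← blockDiagonal_mul, ← blockDiagonal_one]
  exact congrArg blockDiagonal (funext hM)

end Matrix

section Gates

variable {ι : Type*} [Fintype ι] [DecidableEq ι]

theorem inv_sqrt_two_mul_self : (√2 : ℂ)⁻¹ * (√2 : ℂ)⁻¹ = 2⁻¹ := by
  rw [← mul_inv, ← Complex.ofReal_mul, Real.mul_self_sqrt zero_le_two, Complex.ofReal_ofNat]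

noncomputable def planeRot (i j : ι) : Matrix ι ι ℂ :=
  (of fun l => if l = i then (√2 : ℂ)⁻¹ • (Pi.single i 1 + Pi.single j 1)
    else if l = j then (√2 : ℂ)⁻¹ • (Pi.single j 1 - Pi.single i 1) else Pi.single l 1)ᵀ

theorem planeRot_mulVec_single_left (i j : ι) :
    planeRot i j *ᵥ Pi.single i 1 = (√2 : ℂ)⁻¹ • (Pi.single i 1 + Pi.single j 1) := by
  rw [mulVec_single_one]
  exact if_pos rfl

theorem planeRot_mulVec_single_right {i j : ι} (hij : i ≠ j) :
    planeRot i j *ᵥ Pi.single j 1 = (√2 : ℂ)⁻¹ • (Pi.single j 1 - Pi.single i 1) := by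
  rw [mulVec_single_one]
  exact (if_neg hij.symm).trans (if_pos rfl)

theorem planeRot_mulVec_single_of_ne {i j k : ι} (hki : k ≠ i) (hkj : k ≠ j) :
    planeRot i j *ᵥ Pi.single k 1 = Pi.single k 1 := by
  rw [mulVec_single_one]
  exact (if_neg hki).trans (if_neg hkj)

theorem planeRot_mem_unitaryGroup {i j : ι} (hij : i ≠ j) :
    planeRot i j ∈ unitaryGroup ι ℂ := by
  refine mem_unitaryGroup_of_orthonormal_cols fun k l => ?_
  have hs := inv_sqrt_two_mul_self
  have trichotomy (k : ι) : k = i ∨ k = j ∨ k ≠ i ∧ k ≠ j := by tauto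
  rw [← mulVec_single_one, ← mulVec_single_one]
  rcases trichotomy k with rfl | rfl | ⟨hki, hkj⟩ <;>
    rcases trichotomy l with rfl | rfl | ⟨hli, hlj⟩ <;>
    simp [-mulVec_single, planeRot_mulVec_single_left, planeRot_mulVec_single_right,
      planeRot_mulVec_single_of_ne, one_apply, Pi.single_apply, *] <;>
    grind

noncomputable def signedSwap (p q : ι) : Matrix ι ι ℂ :=
  diagonal (fun k => if k = p ∨ k = q then -1 else 1) * (Equiv.swap p q).permMatrix ℂ

theorem signedSwap_mem_unitaryGroup (p q : ι) : signedSwap p q ∈ unitaryGroup ι ℂ :=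
  mul_mem (diagonal_mem_unitaryGroup fun k => by split_ifs <;> simp)
    (permMatrix_mem_unitaryGroup _)

theorem signedSwap_mulVec_single_left (p q : ι) :
    signedSwap p q *ᵥ Pi.single p 1 = -Pi.single q 1 := by
  simp [signedSwap, ← mulVec_mulVec, -mulVec_single, permMatrix_mulVec_single, Equiv.swap_inv,
    diagonal_mulVec_single, Pi.single_neg]

theorem signedSwap_mulVec_single_right (p q : ι) :
    signedSwap p q *ᵥ Pi.single q 1 = -Pi.single p 1 := by
  simp [signedSwap, ← mulVec_mulVec, -mulVec_single, permMatrix_mulVec_single, Equiv.swap_inv,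
    diagonal_mulVec_single, Pi.single_neg]

theorem signedSwap_mulVec_single_of_ne {p q k : ι} (hp : k ≠ p) (hq : k ≠ q) :
    signedSwap p q *ᵥ Pi.single k 1 = Pi.single k 1 := by
  simp [signedSwap, ← mulVec_mulVec, -mulVec_single, permMatrix_mulVec_single, Equiv.swap_inv,
    Equiv.swap_apply_of_ne_of_ne hp hq, diagonal_mulVec_single, hp, hq]

theorem phase_kickback {U : Matrix ι ι ℂ} (hU : U ∈ unitaryGroup ι ℂ) {b : ZMod 2 → ι}
    {α β : ι} {t : ℂ}
    (hUb : ∀ p : ZMod 2,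
      U *ᵥ Pi.single (b p) 1 = t • ((-1 : ℂ) ^ p.val • Pi.single α 1 + Pi.single β 1))
    {φ : ι → ℂ} {p q : ZMod 2} (hα : φ α = (-1) ^ p.val) (hβ : φ β = (-1) ^ q.val) :
    (Uᴴ * diagonal φ * U) *ᵥ Pi.single (b p) 1 = (-1 : ℂ) ^ q.val • Pi.single (b q) 1 := by
  have hsq (r : ZMod 2) : ((-1 : ℂ) ^ r.val) * (-1) ^ r.val = 1 := by
    rw [← mul_pow, neg_one_mul, neg_neg, one_pow]
  have hphase : diagonal φ *ᵥ (U *ᵥ Pi.single (b p) 1)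
      = (-1 : ℂ) ^ q.val • (U *ᵥ Pi.single (b q) 1) := by
    simp only [hUb, mulVec_smul, mulVec_add, diagonal_mulVec_single, hα, hβ, smul_add,
      ← smul_eq_mul, Pi.single_smul']
    linear_combination (norm := module)
      (t • (hsq p).trans (hsq q).symm) • Pi.single α (1 : ℂ)
  rw [← mulVec_mulVec, ← mulVec_mulVec, hphase, mulVec_smul, mulVec_mulVec,
    ← star_eq_conjTranspose, mem_unitaryGroup_iff'.mp hU, one_mulVec]

end Gates

theorem zmod_two_eq_zero_or_one (p : ZMod 2) : p = 0 ∨ p = 1 := by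
  decide +revert

section Register

variable {n : ℕ}

theorem bitFin_zero : bitFin n 0 = 0 := rfl

theorem bitFin_one : bitFin n 1 = 1 := rfl

def queryPerm (u v : Fin n) : Equiv.Perm (Fin (n + 1)) :=
  (Equiv.swap 1 v.succ).trans (Equiv.swap 0 u.succ)

theorem queryPerm_zero [NeZero n] (u v : Fin n) : queryPerm u v 0 = u.succ := by
  rw [queryPerm, Equiv.trans_apply,
    Equiv.swap_apply_of_ne_of_ne Fin.zero_ne_one' (Fin.succ_ne_zero v).symm, Equiv.swap_apply_left]

theorem queryPerm_one {u v : Fin n} (huv : u ≠ v) : queryPerm u v 1 = v.succ := by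
  rw [queryPerm, Equiv.trans_apply, Equiv.swap_apply_left,
    Equiv.swap_apply_of_ne_of_ne (Fin.succ_ne_zero v) ((Fin.succ_injective n).ne huv.symm)]

def oraclePhase (x : Fin n → ZMod 2) (k : Fin (n + 1)) : ℂ :=
  if h : (k : ℕ) = 0 then 1
  else (-1 : ℂ) ^ (x ⟨(k : ℕ) - 1, by have := k.isLt; omega⟩).val

theorem oraclePhase_succ (x : Fin n → ZMod 2) (u : Fin n) :
    oraclePhase x u.succ = (-1) ^ (x u).val := by
  simp [oraclePhase]

theorem oracleK_eq_blockDiagonal (x : Fin n → ZMod 2) :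
    oracleK n x = blockDiagonal fun _ => diagonal (oraclePhase x) := by
  rw [blockDiagonal_diagonal]
  rfl

noncomputable def queryPrep (u v : Fin n) : Matrix (Fin (n + 1)) (Fin (n + 1)) ℂ :=
  (queryPerm u v)⁻¹.permMatrix ℂ * planeRot 0 1

theorem queryPrep_mem_unitaryGroup [NeZero n] (u v : Fin n) :
    queryPrep u v ∈ unitaryGroup (Fin (n + 1)) ℂ :=
  mul_mem (permMatrix_mem_unitaryGroup _) (planeRot_mem_unitaryGroup Fin.zero_ne_one')

theorem queryPrep_mulVec_bitFin [NeZero n] {u v : Fin n} (huv : u ≠ v) (p : ZMod 2) :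
    queryPrep u v *ᵥ Pi.single (bitFin n p) 1
      = (√2 : ℂ)⁻¹ • ((-1 : ℂ) ^ p.val • Pi.single u.succ 1 + Pi.single v.succ 1) := by
  have hrot : planeRot 0 1 *ᵥ Pi.single (bitFin n p) 1
      = (√2 : ℂ)⁻¹ • ((-1 : ℂ) ^ p.val • Pi.single 0 1 + Pi.single 1 1) := by
    rcases zmod_two_eq_zero_or_one p with rfl | rfl
    · rw [bitFin_zero, planeRot_mulVec_single_left, ZMod.val_zero, pow_zero, one_smul]
    · rw [bitFin_one, planeRot_mulVec_single_right Fin.zero_ne_one', ZMod.val_one, pow_one,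
        neg_one_smul, neg_add_eq_sub]
  rw [queryPrep, ← mulVec_mulVec, hrot]
  simp only [mulVec_smul, mulVec_add, permMatrix_mulVec_single, inv_inv, queryPerm_zero,
    queryPerm_one huv]

theorem queryPrep_kickback [NeZero n] {u v : Fin n} (huv : u ≠ v) (x : Fin n → ZMod 2) :
    ((queryPrep u v)ᴴ * diagonal (oraclePhase x) * queryPrep u v) *ᵥ
        Pi.single (bitFin n (x u)) 1
      = (-1 : ℂ) ^ (x v).val • Pi.single (bitFin n (x v)) 1 :=
  phase_kickback (queryPrep_mem_unitaryGroup u v) (queryPrep_mulVec_bitFin huv)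
    (oraclePhase_succ x u) (oraclePhase_succ x v)

noncomputable def bitSwap (n : ℕ) : Matrix (KIdx n) (KIdx n) ℂ :=
  signedSwap (1, 0, 0) (0, 0, 1)

theorem bitSwap_mulVec_control_zero [NeZero n] (p q : ZMod 2) :
    bitSwap n *ᵥ ((-1 : ℂ) ^ p.val • Pi.single (bitFin n p, 0, q) 1)
      = (-1 : ℂ) ^ q.val • Pi.single (bitFin n q, 0, p) 1 := by
  have h000 : bitSwap n *ᵥ Pi.single (0, 0, 0) 1 = Pi.single (0, 0, 0) 1 :=
    signedSwap_mulVec_single_of_ne (by simp) (by simp)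
  have h101 : bitSwap n *ᵥ Pi.single (1, 0, 1) 1 = Pi.single (1, 0, 1) 1 :=
    signedSwap_mulVec_single_of_ne (by simp) (by simp [Fin.zero_ne_one'.symm])
  have h100 : bitSwap n *ᵥ Pi.single (1, 0, 0) 1 = -Pi.single (0, 0, 1) 1 :=
    signedSwap_mulVec_single_left _ _
  have h001 : bitSwap n *ᵥ Pi.single (0, 0, 1) 1 = -Pi.single (1, 0, 0) 1 :=
    signedSwap_mulVec_single_right _ _
  rcases zmod_two_eq_zero_or_one p with rfl | rfl <;>
    rcases zmod_two_eq_zero_or_one q with rfl | rfl <;>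
    simp only [bitFin_zero, bitFin_one, ZMod.val_zero, ZMod.val_one, pow_zero, pow_one, one_smul,
      neg_one_smul, mulVec_neg, neg_neg, h000, h101, h100, h001]

theorem bitSwap_mulVec_control_one (i : Fin (n + 1)) (u : ZMod 2) :
    bitSwap n *ᵥ Pi.single (i, 1, u) 1 = Pi.single (i, 1, u) 1 :=
  signedSwap_mulVec_single_of_ne (by simp) (by simp)

end Register

section Extend

variable {n m : ℕ}

theorem extendW_mul (M N : Matrix (KIdx n) (KIdx n) ℂ) :
    extendW n m (M * N) = extendW n m M * extendW n m N := by
  simpa [extendW] using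
    mul_kronecker_mul M N (1 : Matrix (Fin m → ZMod 2) (Fin m → ZMod 2) ℂ) 1

theorem extendW_mulVec_etens {M : Matrix (KIdx n) (KIdx n) ℂ} {k j : KIdx n} {c : ℂ}
    (h : M *ᵥ Pi.single k 1 = c • Pi.single j 1) (W : (Fin m → ZMod 2) → ℂ) :
    extendW n m M *ᵥ etens n m k W = c • etens n m j W := by
  have hetens (k : KIdx n) :
      etens n m k W = fun p => (Pi.single k 1 : KIdx n → ℂ) p.1 * W p.2 := by
    ext p
    simp [etens, Pi.single_apply]
  rw [hetens, hetens, extendW, kroneckerMap_mul_mulVec_mul, h, one_mulVec]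
  ext p
  simp [mul_assoc]

end Extend

section Untangle

variable {n : ℕ} (a b c d : Fin n)

noncomputable def queryBlocks (k : ZMod 2 × ZMod 2) : Matrix (Fin (n + 1)) (Fin (n + 1)) ℂ :=
  if k.1 = 0 then queryPrep a d else queryPrep c b

noncomputable def untangleA : Matrix (KIdx n) (KIdx n) ℂ :=
  blockDiagonal (queryBlocks a b c d)

noncomputable def untangleB : Matrix (KIdx n) (KIdx n) ℂ :=
  bitSwap n * (untangleA a b c d)ᴴ

theorem untangleB_mul_oracleK_mul_untangleA (x : Fin n → ZMod 2) :
    untangleB a b c d * oracleK n x * untangleA a b c d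
      = bitSwap n * blockDiagonal fun k =>
          (queryBlocks a b c d k)ᴴ * diagonal (oraclePhase x) * queryBlocks a b c d k := by
  rw [untangleB, untangleA, oracleK_eq_blockDiagonal, blockDiagonal_conjTranspose,
    mul_assoc (bitSwap n), mul_assoc (bitSwap n), ← blockDiagonal_mul, ← blockDiagonal_mul]

variable [NeZero n]

theorem untangleA_mem_unitaryGroup : untangleA a b c d ∈ unitaryGroup (KIdx n) ℂ :=
  blockDiagonal_mem_unitaryGroup fun k => by
    unfold queryBlocks
    split_ifs <;> exact queryPrep_mem_unitaryGroup _ _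

theorem untangleB_mem_unitaryGroup : untangleB a b c d ∈ unitaryGroup (KIdx n) ℂ :=
  mul_mem (signedSwap_mem_unitaryGroup _ _)
    (Unitary.star_mem (untangleA_mem_unitaryGroup a b c d))

variable {a b c d}

theorem untangle_mulVec_control_zero (had : a ≠ d) (x : Fin n → ZMod 2) :
    (untangleB a b c d * oracleK n x * untangleA a b c d) *ᵥ
        Pi.single (bitFin n (x a), 0, x b) 1
      = (-1 : ℂ) ^ (x b).val • Pi.single (bitFin n (x b), 0, x d) 1 := by
  have hblock : queryBlocks a b c d (0, x b) = queryPrep a d := if_pos rfl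
  rw [untangleB_mul_oracleK_mul_untangleA, ← mulVec_mulVec,
    blockDiagonal_mulVec_single (by rw [hblock]; exact queryPrep_kickback had x),
    bitSwap_mulVec_control_zero]

theorem untangle_mulVec_control_one (hbc : b ≠ c) (x : Fin n → ZMod 2) :
    (untangleB a b c d * oracleK n x * untangleA a b c d) *ᵥ
        Pi.single (bitFin n (x c), 1, x d) 1
      = (-1 : ℂ) ^ (x b).val • Pi.single (bitFin n (x b), 1, x d) 1 := by
  have hblock : queryBlocks a b c d (1, x d) = queryPrep c b := if_neg one_ne_zero
  rw [untangleB_mul_oracleK_mul_untangleA, ← mulVec_mulVec,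
    blockDiagonal_mulVec_single (by rw [hblock]; exact queryPrep_kickback hbc.symm x),
    mulVec_smul, bitSwap_mulVec_control_one]

end Untangle

theorem stmt10_general (n m : ℕ) (a b c d : Fin n) (had : a ≠ d) (hbc : b ≠ c) :
    ∃ A B : Matrix (KIdx n) (KIdx n) ℂ,
      A ∈ Matrix.unitaryGroup (KIdx n) ℂ ∧
      B ∈ Matrix.unitaryGroup (KIdx n) ℂ ∧
      ∀ (x : Fin n → ZMod 2) (W1 W2 : (Fin m → ZMod 2) → ℂ),
        (extendW n m B).mulVec ((extendW n m (oracleK n x)).mulVec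
            ((extendW n m A).mulVec
              (((Real.sqrt 2 : ℂ))⁻¹ •
                (etens n m (bitFin n (x a), 0, x b) W1
                  + etens n m (bitFin n (x c), 1, x d) W2))))
          = ((-1 : ℂ) ^ (x b).val) •
              (((Real.sqrt 2 : ℂ))⁻¹ •
                (etens n m (bitFin n (x b), 0, x d) W1
                  + etens n m (bitFin n (x b), 1, x d) W2)) := by
  have : NeZero n := NeZero.of_pos a.pos
  refine ⟨untangleA a b c d, untangleB a b c d, untangleA_mem_unitaryGroup a b c d,
    untangleB_mem_unitaryGroup a b c d, fun x W1 W2 => ?_⟩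
  rw [mulVec_mulVec, mulVec_mulVec, ← extendW_mul, ← extendW_mul, mulVec_smul, mulVec_add,
    extendW_mulVec_etens (untangle_mulVec_control_zero had x),
    extendW_mulVec_etens (untangle_mulVec_control_one hbc x), smul_comm]
  simp only [smul_add]

/-- Untangling with one query: there are `x`-independent unitaries `A`, `B` on
`ℂ^{n+1} ⊗ ℂ² ⊗ ℂ²` transforming
`(1/√2)(e_{x_a} ⊗ e_0 ⊗ e_{x_b} ⊗ W₁ + e_{x_c} ⊗ e_1 ⊗ e_{x_d} ⊗ W₂)` into
`(−1)^{x_b} (1/√2)(e_{x_b} ⊗ e_0 ⊗ e_{x_d} ⊗ W₁ + e_{x_b} ⊗ e_1 ⊗ e_{x_d} ⊗ W₂)`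
with a single oracle query. -/
theorem stmt10 (n m : ℕ) (hn : 4 ≤ n) (a b c d : Fin n)
    (hab : a ≠ b) (hac : a ≠ c) (had : a ≠ d)
    (hbc : b ≠ c) (hbd : b ≠ d) (hcd : c ≠ d) :
    ∃ A B : Matrix (KIdx n) (KIdx n) ℂ,
      A ∈ Matrix.unitaryGroup (KIdx n) ℂ ∧
      B ∈ Matrix.unitaryGroup (KIdx n) ℂ ∧
      ∀ (x : Fin n → ZMod 2) (W1 W2 : (Fin m → ZMod 2) → ℂ),
        (extendW n m B).mulVec ((extendW n m (oracleK n x)).mulVec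
            ((extendW n m A).mulVec
              (((Real.sqrt 2 : ℂ))⁻¹ •
                (etens n m (bitFin n (x a), 0, x b) W1
                  + etens n m (bitFin n (x c), 1, x d) W2))))
          = ((-1 : ℂ) ^ (x b).val) •
              (((Real.sqrt 2 : ℂ))⁻¹ •
                (etens n m (bitFin n (x b), 0, x d) W1
                  + etens n m (bitFin n (x b), 1, x d) W2)) :=
  stmt10_general n m a b c d had hbc
end

section
/- (Iterated untangling.) Let n ≥ 1, t ≥ 1, s = 2t, and let r: {1,…,2s} → {1,…,n} be injective. Then there exist unitaries V_0, V_1, …, V_t on H = ℂ^{n+1} ⊗ (ℂ²)^{⊗(s+1)} and a function σ: {0,1}^n → {+1,−1} such that for every x ∈ {0,1}^n and all signs ε, δ ∈ {+1,−1}: V_t (O_x⊗I) V_{t−1} (O_x⊗I) ⋯ V_1 (O_x⊗I) V_0 β_0 = σ(x) · β_f, where β_0 = (1/√2)[ ε · e_0 ⊗ e_0 ⊗ (⊗_{i=1}^{s} e_{x_{r(i)}}) + δ · e_0 ⊗ e_1 ⊗ (⊗_{i=1}^{s} e_{x_{r(s+i)}}) ] and β_f = (1/√2)( ε · e_0 ⊗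 e_0 + δ · e_0 ⊗ e_1 ) ⊗ (⊗_{i=1}^{t} ( e_{x_{r(2i)}} ⊗ e_{x_{r(s+2i)}} )). In particular, the final state is a tensor product (unentangled) state, reached using t oracle queries. -/
open Matrix

/-- The standard basis vector of `ℂ^{n+1} ⊗ (ℂ²)^{⊗m}` at index `p0`. -/
noncomputable def bv (n m : ℕ) (p0 : QIdx n m) : QIdx n m → ℂ :=
  fun p => if p = p0 then 1 else 0

/-!
Round `k < t` works on the qubits `2k+1, 2k+2`, which hold the bits of indices `(2k, 2k+1)` in
branch 0 and `(2t+2k, 2t+2k+1)` in branch 1, and must end up holding `(2k+1, 2t+2k+1)` in both.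
After swapping the two qubits, the second one holds a bit `a` that is known to the branch; a
Hadamard on it, one query whose index depends on the branch and on the qubit, and a second
Hadamard replace `a` by the wanted bit `b` (phase kickback: the query cancels the phase `(-1)^a`
the Hadamard created). A swap controlled by the branch qubit restores the order in branch 1.
Each round maps the basis state of each branch to a basis state without any phase, so by
linearity the superposition `β₀` is carried to `β_f` with `σ ≡ 1`.
-/

section PermutationGates

variable {ι R : Type*} [Fintype ι] [DecidableEq ι] [CommRing R]

lemma Equiv.Perm.permMatrix_mem_unitaryGroup [StarRing R] (σ : Equiv.Perm ι) :
    σ.permMatrix R ∈ unitaryGroup ι R := by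
  rw [mem_unitaryGroup_iff', star_eq_conjTranspose, conjTranspose_permMatrix, ← permMatrix_mul,
    mul_inv_cancel, permMatrix_one]

lemma Function.Involutive.permMatrix_mulVec_single {f : ι → ι} (hf : Function.Involutive f)
    (p : ι) : (hf.toPerm f).permMatrix R *ᵥ Pi.single p 1 = Pi.single (f p) 1 := by
  ext q
  simp only [permMatrix_mulVec, Function.comp_apply, Function.Involutive.coe_toPerm,
    Pi.single_apply, hf.eq_iff]

end PermutationGates

section FactorGates

lemma Prod.eq_mk_update_iff {α κ β : Type*} [DecidableEq κ] {j : κ} {q p : α × (κ → β)}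
    {u : β} :
    q = (p.1, Function.update p.2 j u) ↔
      (q.1 = p.1 ∧ ∀ i ≠ j, q.2 i = p.2 i) ∧ q.2 j = u := by
  constructor
  · rintro rfl
    simp +contextual [Function.update_of_ne]
  · rintro ⟨⟨h1, h2⟩, h3⟩
    ext1
    · exact h1
    · funext i
      by_cases hi : i = j
      · subst hi; simpa using h3
      · simpa [Function.update_of_ne hi] using h2 i hi

variable {α κ β R : Type*} [DecidableEq α] [Fintype κ] [DecidableEq κ] [DecidableEq β]
  [CommRing R]

def onFactor (j : κ) (G : Matrix β β R) : Matrix (α × (κ → β)) (α × (κ → β)) R :=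
  of fun a b => if a.1 = b.1 ∧ ∀ i ≠ j, a.2 i = b.2 i then G (a.2 j) (b.2 j) else 0

lemma onFactor_mulVec_single [Fintype α] [Fintype β] (j : κ) (G : Matrix β β R)
    (p : α × (κ → β)) :
    onFactor j G *ᵥ Pi.single p 1 =
      ∑ u, G u (p.2 j) • Pi.single (p.1, Function.update p.2 j u) 1 := by
  ext q
  simp only [mulVec_single_one, col_apply, onFactor, of_apply, Finset.sum_apply, Pi.smul_apply,
    Pi.single_apply, Prod.eq_mk_update_iff, smul_eq_mul, mul_ite, mul_one, mul_zero, ite_and]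
  split_ifs <;> simp [eq_comm (a := q.2 j)]

lemma onFactor_mul [Fintype α] [Fintype β] (j : κ) (G H : Matrix β β R) :
    (onFactor j (G * H) : Matrix (α × (κ → β)) _ R) = onFactor j G * onFactor j H := by
  refine ext_of_mulVec_single fun p => ?_
  simp only [← mulVec_mulVec, onFactor_mulVec_single, mulVec_sum, mulVec_smul,
    Function.update_self, Function.update_idem, Finset.smul_sum, smul_smul, mul_apply,
    Finset.sum_smul]
  rw [Finset.sum_comm]
  simp_rw [mul_comm]

lemma onFactor_one (j : κ) : (onFactor j 1 : Matrix (α × (κ → β)) _ R) = 1 := by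
  ext a b
  have hab := Prod.eq_mk_update_iff (q := a) (p := b) (j := j) (u := b.2 j)
  rw [Function.update_eq_self, Prod.mk.eta] at hab
  simp only [onFactor, of_apply, one_apply, hab, ite_and]

lemma onFactor_conjTranspose [StarRing R] (j : κ) (G : Matrix β β R) :
    (onFactor j G : Matrix (α × (κ → β)) _ R)ᴴ = onFactor j Gᴴ := by
  ext a b
  simp only [onFactor, conjTranspose_apply, of_apply, eq_comm (a := a.1), eq_comm (a := a.2 _)]
  split_ifs <;> simp

lemma onFactor_mem_unitaryGroup [Fintype α] [Fintype β] [StarRing R] (j : κ) {G : Matrix β β R}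
    (hG : G ∈ unitaryGroup β R) :
    (onFactor j G : Matrix (α × (κ → β)) _ R) ∈ unitaryGroup (α × (κ → β)) R := by
  rw [mem_unitaryGroup_iff', star_eq_conjTranspose, onFactor_conjTranspose, ← onFactor_mul,
    ← star_eq_conjTranspose, mem_unitaryGroup_iff'.1 hG, onFactor_one]

end FactorGates

section Qubits

noncomputable def hadamardGate : Matrix (ZMod 2) (ZMod 2) ℂ :=
  of fun u v => (Real.sqrt 2 : ℂ)⁻¹ * (-1) ^ (u * v).val

noncomputable def pauliZGate : Matrix (ZMod 2) (ZMod 2) ℂ :=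
  diagonal fun u => (-1) ^ u.val

lemma ZMod.sum_univ_two {M : Type*} [AddCommMonoid M] (f : ZMod 2 → M) :
    ∑ u, f u = f 0 + f 1 :=
  Fin.sum_univ_two f

lemma ZMod.eq_zero_or_eq_one (u : ZMod 2) : u = 0 ∨ u = 1 := by
  revert u
  decide

lemma Complex.ofReal_sqrt_two_sq : (Real.sqrt 2 : ℂ) ^ 2 = 2 := by
  rw [← Complex.ofReal_pow, Real.sq_sqrt zero_le_two, Complex.ofReal_ofNat]

lemma hadamardGate_mem_unitaryGroup : hadamardGate ∈ unitaryGroup (ZMod 2) ℂ := by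
  rw [mem_unitaryGroup_iff']
  have h1 : (1 : ZMod 2).val = 1 := rfl
  ext u v
  simp only [star_eq_conjTranspose, mul_apply, conjTranspose_apply, hadamardGate, of_apply,
    one_apply]
  rw [ZMod.sum_univ_two]
  obtain rfl | rfl := u.eq_zero_or_eq_one <;> obtain rfl | rfl := v.eq_zero_or_eq_one <;>
    simp [Complex.conj_ofReal, h1] <;> ring_nf <;> norm_num [Complex.ofReal_sqrt_two_sq]

lemma pauliZGate_mem_unitaryGroup : pauliZGate ∈ unitaryGroup (ZMod 2) ℂ := by
  rw [mem_unitaryGroup_iff', pauliZGate, star_eq_conjTranspose, diagonal_conjTranspose,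
    diagonal_mul_diagonal, ← diagonal_one]
  congr 1
  funext u
  simp [← mul_pow]

variable {α κ : Type*} [Fintype α] [DecidableEq α] [Fintype κ] [DecidableEq κ]

lemma onFactor_hadamardGate_mulVec_single (j : κ) (p : α × (κ → ZMod 2)) :
    onFactor j hadamardGate *ᵥ Pi.single p 1 =
      (Real.sqrt 2 : ℂ)⁻¹ • (Pi.single (p.1, Function.update p.2 j 0) 1 +
        (-1 : ℂ) ^ (p.2 j).val • Pi.single (p.1, Function.update p.2 j 1) 1) := by
  rw [onFactor_mulVec_single, ZMod.sum_univ_two]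
  simp [hadamardGate, smul_add, smul_smul]

lemma onFactor_pauliZGate_mulVec_single (j : κ) (p : α × (κ → ZMod 2)) :
    onFactor j pauliZGate *ᵥ Pi.single p 1 = (-1 : ℂ) ^ (p.2 j).val • Pi.single p 1 := by
  rw [onFactor_mulVec_single, Finset.sum_eq_single (p.2 j)]
  · simp [pauliZGate]
  · intro u _ hu
    simp [pauliZGate, hu]
  · simp

end Qubits

section Overwrite

variable {n m : ℕ}

lemma bv_eq_single (p : QIdx n m) : bv n m p = Pi.single p 1 := by
  funext q
  simp [bv, Pi.single_apply]

lemma oracleMat_mulVec_single_succ (x : Fin n → ZMod 2) (i : Fin n) (w : Fin m → ZMod 2) :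
    oracleMat n m x *ᵥ Pi.single (i.succ, w) 1 =
      (-1 : ℂ) ^ (x i).val • Pi.single (i.succ, w) 1 := by
  ext q
  simp [oracleMat, Pi.single_apply]

def queryRoute (tgt : (Fin m → ZMod 2) → Fin n) : Equiv.Perm (QIdx n m) :=
  Function.Involutive.toPerm (fun p => (Equiv.swap 0 (tgt p.2).succ p.1, p.2)) fun p => by simp

lemma queryRoute_mulVec_single (tgt : (Fin m → ZMod 2) → Fin n) (p : QIdx n m) :
    (queryRoute tgt).permMatrix ℂ *ᵥ Pi.single p 1 =
      Pi.single (Equiv.swap 0 (tgt p.2).succ p.1, p.2) 1 :=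
  Function.Involutive.permMatrix_mulVec_single _ p

lemma queryRoute_oracleMat_queryRoute (x : Fin n → ZMod 2) (tgt : (Fin m → ZMod 2) → Fin n)
    (w : Fin m → ZMod 2) :
    (queryRoute tgt).permMatrix ℂ *ᵥ (oracleMat n m x *ᵥ
        ((queryRoute tgt).permMatrix ℂ *ᵥ Pi.single (0, w) 1)) =
      (-1 : ℂ) ^ (x (tgt w)).val • Pi.single (0, w) 1 := by
  simp only [queryRoute_mulVec_single, Equiv.swap_apply_left, oracleMat_mulVec_single_succ,
    mulVec_smul, Equiv.swap_apply_right]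

noncomputable def overwritePrep (j : Fin m) (tgt : (Fin m → ZMod 2) → Fin n) :
    Matrix (QIdx n m) (QIdx n m) ℂ :=
  (queryRoute tgt).permMatrix ℂ * onFactor j hadamardGate

noncomputable def overwriteFinish (j : Fin m) (tgt : (Fin m → ZMod 2) → Fin n) :
    Matrix (QIdx n m) (QIdx n m) ℂ :=
  onFactor j pauliZGate * onFactor j hadamardGate * (queryRoute tgt).permMatrix ℂ

/-- Phase kickback: the first Hadamard puts `(-1)^a` on the `|1⟩` side of qubit `j`, where the
query cancels it, while the query puts `(-1)^b` on the `|0⟩` side; the second Hadamard maps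
`(-1)^b |0⟩ + |1⟩` to `√2 (-1)^b |b⟩`, and `Z` removes the sign. -/
lemma overwriteFinish_oracleMat_overwritePrep (x : Fin n → ZMod 2) (j : Fin m)
    (tgt : (Fin m → ZMod 2) → Fin n) (w : Fin m → ZMod 2) (b : ZMod 2)
    (h1 : x (tgt (Function.update w j 1)) = w j) (h0 : x (tgt (Function.update w j 0)) = b) :
    overwriteFinish j tgt *ᵥ
        (oracleMat n m x *ᵥ (overwritePrep j tgt *ᵥ Pi.single (0, w) 1)) =
      Pi.single (0, Function.update w j b) 1 := by
  have hsq : ((-1 : ℂ) ^ (w j).val) * (-1) ^ (w j).val = 1 := by rw [← mul_pow]; simp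
  have hv1 : (1 : ZMod 2).val = 1 := rfl
  simp only [overwritePrep, overwriteFinish, ← mulVec_mulVec, onFactor_hadamardGate_mulVec_single,
    mulVec_smul, mulVec_add, queryRoute_oracleMat_queryRoute, h1, h0, smul_smul,
    Function.update_idem, Function.update_self, onFactor_pauliZGate_mulVec_single]
  rw [← mul_assoc, hsq, one_mul]
  obtain rfl | rfl := b.eq_zero_or_eq_one <;>
    simp only [ZMod.val_zero, pow_zero, hv1, pow_one, smul_add, smul_smul] <;>
    match_scalars <;> ring_nf <;> norm_num [Complex.ofReal_sqrt_two_sq]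

lemma overwritePrep_mem_unitaryGroup (j : Fin m) (tgt : (Fin m → ZMod 2) → Fin n) :
    overwritePrep j tgt ∈ unitaryGroup (QIdx n m) ℂ :=
  mul_mem (Equiv.Perm.permMatrix_mem_unitaryGroup _)
    (onFactor_mem_unitaryGroup j hadamardGate_mem_unitaryGroup)

lemma overwriteFinish_mem_unitaryGroup (j : Fin m) (tgt : (Fin m → ZMod 2) → Fin n) :
    overwriteFinish j tgt ∈ unitaryGroup (QIdx n m) ℂ :=
  mul_mem (mul_mem (onFactor_mem_unitaryGroup j pauliZGate_mem_unitaryGroup)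
    (onFactor_mem_unitaryGroup j hadamardGate_mem_unitaryGroup))
    (Equiv.Perm.permMatrix_mem_unitaryGroup _)

end Overwrite

section QueryAlgorithms

variable {n m : ℕ}

lemma algMat_mulVec_of_rounds (x : Fin n → ZMod 2)
    (A B : ℕ → Matrix (QIdx n m) (QIdx n m) ℂ)
    (ψ : ℕ → QIdx n m → ℂ) (T : ℕ)
    (hround : ∀ k < T, B k *ᵥ (oracleMat n m x *ᵥ (A k *ᵥ ψ k)) = ψ (k + 1)) :
    algMat n m x T (fun i => A i * if (i : ℕ) = 0 then 1 else B (i - 1)) *ᵥ ψ 0 =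
      A T *ᵥ ψ T := by
  induction T with
  | zero => simp [algMat]
  | succ T ih =>
    rw [algMat, ← mulVec_mulVec, ← mulVec_mulVec]
    simp only [Fin.val_castSucc]
    rw [ih fun k hk => hround k (by omega)]
    simp only [Fin.val_last, Nat.add_one_ne_zero, if_false, Nat.add_sub_cancel, ← mulVec_mulVec,
      hround T (by omega)]

end QueryAlgorithms

section Untangling

variable {n : ℕ} (t : ℕ) (idx : ℕ → Fin n)

/-- Index of the bit held by qubit `j ≥ 1` of branch `c` after `k` rounds. Indices below `2t`
are the bits of branch 0, the others those of branch 1; qubits `j ≤ 2k` already hold their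
final, branch-independent bit. -/
def untangleSource (k : ℕ) (c : ZMod 2) (j : ℕ) : ℕ :=
  if j ≤ 2 * k then (if j % 2 = 1 then j else 2 * t + j - 1)
  else if c = 0 then j - 1 else 2 * t + j - 1

def untanglePattern (x : Fin n → ZMod 2) (k : ℕ) (c : ZMod 2) : Fin (2 * t + 1) → ZMod 2 :=
  fun j => if (j : ℕ) = 0 then c else x (idx (untangleSource t k c j))

variable {t}

def pairFst (k : Fin t) : Fin (2 * t + 1) := ⟨2 * k + 1, by omega⟩

def pairSnd (k : Fin t) : Fin (2 * t + 1) := ⟨2 * k + 2, by omega⟩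

/-- After the swap of round `k`, qubit `pairSnd k` holds the bit of index `2k` (branch 0) or
`2t + 2k` (branch 1), which is erased by querying it on the `|1⟩` side, while the bit to be
written, of index `2t + 2k + 1` resp. `2k + 1`, is queried on the `|0⟩` side. -/
def roundTarget (k : Fin t) (w : Fin (2 * t + 1) → ZMod 2) : Fin n :=
  idx <| if w 0 = 0 then (if w (pairSnd k) = 0 then 2 * t + 2 * k + 1 else 2 * k)
    else (if w (pairSnd k) = 0 then 2 * k + 1 else 2 * t + 2 * k)

lemma untangleSource_pairFst (k : ℕ) (c : ZMod 2) :
    untangleSource t k c (2 * k + 1) = if c = 0 then 2 * k else 2 * t + 2 * k := by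
  unfold untangleSource; split_ifs <;> omega

lemma untangleSource_pairSnd (k : ℕ) (c : ZMod 2) :
    untangleSource t k c (2 * k + 2) = if c = 0 then 2 * k + 1 else 2 * t + 2 * k + 1 := by
  unfold untangleSource; split_ifs <;> omega

lemma untangleSource_succ_pairFst (k : ℕ) (c : ZMod 2) :
    untangleSource t (k + 1) c (2 * k + 1) = 2 * k + 1 := by
  unfold untangleSource; split_ifs <;> omega

lemma untangleSource_succ_pairSnd (k : ℕ) (c : ZMod 2) :
    untangleSource t (k + 1) c (2 * k + 2) = 2 * t + 2 * k + 1 := by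
  unfold untangleSource; split_ifs <;> omega

lemma untangleSource_succ_of_ne (k : ℕ) (c : ZMod 2) {j : ℕ} (h1 : j ≠ 2 * k + 1)
    (h2 : j ≠ 2 * k + 2) : untangleSource t (k + 1) c j = untangleSource t k c j := by
  unfold untangleSource; split_ifs <;> omega

variable {idx} in
lemma untanglePattern_zero (x : Fin n → ZMod 2) (k : ℕ) (c : ZMod 2) :
    untanglePattern t idx x k c 0 = c := rfl

variable {idx} in
lemma untanglePattern_of_ne_zero (x : Fin n → ZMod 2) (k : ℕ) (c : ZMod 2) {j : Fin (2 * t + 1)}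
    (hj : (j : ℕ) ≠ 0) : untanglePattern t idx x k c j = x (idx (untangleSource t k c j)) :=
  if_neg hj

lemma untanglePattern_pairFst (x : Fin n → ZMod 2) (k : Fin t) (c : ZMod 2) :
    untanglePattern t idx x k c (pairFst k) =
      x (idx (if c = 0 then 2 * k else 2 * t + 2 * k)) := by
  rw [untanglePattern_of_ne_zero x _ c (by simp [pairFst]), pairFst, untangleSource_pairFst]

lemma untanglePattern_pairSnd (x : Fin n → ZMod 2) (k : Fin t) (c : ZMod 2) :
    untanglePattern t idx x k c (pairSnd k) =
      x (idx (if c = 0 then 2 * k + 1 else 2 * t + 2 * k + 1)) := by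
  rw [untanglePattern_of_ne_zero x _ c (by simp [pairSnd]), pairSnd, untangleSource_pairSnd]

lemma untanglePattern_succ_pairFst (x : Fin n → ZMod 2) (k : Fin t) (c : ZMod 2) :
    untanglePattern t idx x (k + 1) c (pairFst k) = x (idx (2 * k + 1)) := by
  rw [untanglePattern_of_ne_zero x _ c (by simp [pairFst]), pairFst, untangleSource_succ_pairFst]

lemma untanglePattern_succ_pairSnd (x : Fin n → ZMod 2) (k : Fin t) (c : ZMod 2) :
    untanglePattern t idx x (k + 1) c (pairSnd k) = x (idx (2 * t + 2 * k + 1)) := by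
  rw [untanglePattern_of_ne_zero x _ c (by simp [pairSnd]), pairSnd, untangleSource_succ_pairSnd]

lemma untanglePattern_succ_of_ne (x : Fin n → ZMod 2) (k : Fin t) (c : ZMod 2)
    {j : Fin (2 * t + 1)} (h1 : j ≠ pairFst k) (h2 : j ≠ pairSnd k) :
    untanglePattern t idx x (k + 1) c j = untanglePattern t idx x k c j := by
  by_cases hj : (j : ℕ) = 0
  · simp only [untanglePattern, if_pos hj]
  · rw [untanglePattern_of_ne_zero x _ c hj, untanglePattern_of_ne_zero x _ c hj,
      untangleSource_succ_of_ne _ _ (fun h => h1 (Fin.ext h)) (fun h => h2 (Fin.ext h))]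

lemma untanglePattern_succ (x : Fin n → ZMod 2) (k : Fin t) (c : ZMod 2) :
    let v := Function.update (untanglePattern t idx x k c ∘ Equiv.swap (pairFst k) (pairSnd k))
      (pairSnd k) (x (idx (if c = 0 then 2 * t + 2 * k + 1 else 2 * k + 1)))
    (fun j => if c = 1 then v (Equiv.swap (pairFst k) (pairSnd k) j) else v j) =
      untanglePattern t idx x (k + 1) c := by
  intro v
  have hne : pairFst k ≠ pairSnd k := by simp [pairFst, pairSnd, Fin.ext_iff]
  funext j
  by_cases h1 : j = pairFst k
  · subst h1
    obtain rfl | rfl := c.eq_zero_or_eq_one <;>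
      simp [v, hne, untanglePattern_pairSnd, untanglePattern_succ_pairFst]
  by_cases h2 : j = pairSnd k
  · subst h2
    obtain rfl | rfl := c.eq_zero_or_eq_one <;>
      simp [v, hne, untanglePattern_pairSnd, untanglePattern_succ_pairSnd]
  have hj : Equiv.swap (pairFst k) (pairSnd k) j = j := Equiv.swap_apply_of_ne_of_ne h1 h2
  simp only [v, Function.comp_apply, hj, Function.update_of_ne h2, ite_self,
    untanglePattern_succ_of_ne idx x k c h1 h2]

lemma untanglePattern_zero_zero (x : Fin n → ZMod 2) :
    untanglePattern t idx x 0 0 =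
      fun j : Fin (2 * t + 1) => if (j : ℕ) = 0 then 0 else x (idx ((j : ℕ) - 1)) := by
  funext j
  simp only [untanglePattern, untangleSource]
  split_ifs <;> first | rfl | omega

lemma untanglePattern_zero_one (x : Fin n → ZMod 2) :
    untanglePattern t idx x 0 1 =
      fun j : Fin (2 * t + 1) => if (j : ℕ) = 0 then 1 else x (idx (2 * t + (j : ℕ) - 1)) := by
  funext j
  simp only [untanglePattern, untangleSource, one_ne_zero', if_false]
  split_ifs <;> first | rfl | omega

lemma untanglePattern_self (x : Fin n → ZMod 2) (c : ZMod 2) :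
    untanglePattern t idx x t c = fun j : Fin (2 * t + 1) => if (j : ℕ) = 0 then c
      else if (j : ℕ) % 2 = 1 then x (idx j) else x (idx (2 * t + (j : ℕ) - 1)) := by
  funext j
  simp only [untanglePattern, untangleSource]
  split_ifs <;> first | rfl | omega

end Untangling

section Rounds

variable {n t : ℕ} (idx : ℕ → Fin n)

lemma swap_pairFst_pairSnd_zero (k : Fin t) : Equiv.swap (pairFst k) (pairSnd k) 0 = 0 :=
  Equiv.swap_apply_of_ne_of_ne (by simp [pairFst, Fin.ext_iff]) (by simp [pairSnd, Fin.ext_iff])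

def pairSwap (k : Fin t) : Equiv.Perm (QIdx n (2 * t + 1)) :=
  Function.Involutive.toPerm (fun p => (p.1, p.2 ∘ Equiv.swap (pairFst k) (pairSnd k)))
    fun p => by simp [Function.comp_def]

def ctrlPairSwap (k : Fin t) : Equiv.Perm (QIdx n (2 * t + 1)) :=
  Function.Involutive.toPerm
    (fun p => (p.1, fun j =>
      if p.2 0 = 1 then p.2 (Equiv.swap (pairFst k) (pairSnd k) j) else p.2 j))
    fun p => by by_cases h : p.2 0 = 1 <;> simp [h, swap_pairFst_pairSnd_zero]

lemma pairSwap_mulVec_single (k : Fin t) (p : QIdx n (2 * t + 1)) :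
    (pairSwap k).permMatrix ℂ *ᵥ Pi.single p 1 =
      Pi.single (p.1, p.2 ∘ Equiv.swap (pairFst k) (pairSnd k)) 1 :=
  Function.Involutive.permMatrix_mulVec_single _ p

lemma ctrlPairSwap_mulVec_single (k : Fin t) (p : QIdx n (2 * t + 1)) :
    (ctrlPairSwap k).permMatrix ℂ *ᵥ Pi.single p 1 = Pi.single (p.1, fun j =>
      if p.2 0 = 1 then p.2 (Equiv.swap (pairFst k) (pairSnd k) j) else p.2 j) 1 :=
  Function.Involutive.permMatrix_mulVec_single _ p

noncomputable def roundPrep (k : ℕ) : Matrix (QIdx n (2 * t + 1)) (QIdx n (2 * t + 1)) ℂ :=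
  if h : k < t then
    overwritePrep (pairSnd ⟨k, h⟩) (roundTarget idx ⟨k, h⟩) *
      (pairSwap ⟨k, h⟩).permMatrix ℂ
  else 1

noncomputable def roundFinish (k : ℕ) : Matrix (QIdx n (2 * t + 1)) (QIdx n (2 * t + 1)) ℂ :=
  if h : k < t then
    (ctrlPairSwap ⟨k, h⟩).permMatrix ℂ *
      overwriteFinish (pairSnd ⟨k, h⟩) (roundTarget idx ⟨k, h⟩)
  else 1

lemma roundFinish_oracleMat_roundPrep (x : Fin n → ZMod 2) (k : Fin t) (c : ZMod 2) :
    roundFinish idx k *ᵥ (oracleMat n (2 * t + 1) x *ᵥ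
        (roundPrep idx k *ᵥ Pi.single (0, untanglePattern t idx x k c) 1)) =
      Pi.single (0, untanglePattern t idx x (k + 1) c) 1 := by
  set w := untanglePattern t idx x k c ∘ Equiv.swap (pairFst k) (pairSnd k) with hw
  have hw0 : w 0 = c := by
    simp only [hw, Function.comp_apply, swap_pairFst_pairSnd_zero, untanglePattern_zero]
  have hne : (0 : Fin (2 * t + 1)) ≠ pairSnd k := by simp [pairSnd, Fin.ext_iff]
  rw [roundPrep, roundFinish, dif_pos k.2, dif_pos k.2, Fin.eta, ← mulVec_mulVec,
    ← mulVec_mulVec,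
    pairSwap_mulVec_single, overwriteFinish_oracleMat_overwritePrep x _ _ w
      (x (idx (if c = 0 then 2 * t + 2 * k + 1 else 2 * k + 1))), ctrlPairSwap_mulVec_single]
  · simp only [Function.update_of_ne hne, hw0]
    exact congrArg (fun v => Pi.single (0, v) 1) (untanglePattern_succ idx x k c)
  · obtain rfl | rfl := c.eq_zero_or_eq_one <;>
      simp [roundTarget, Function.update_of_ne hne, hw, untanglePattern_pairFst,
        swap_pairFst_pairSnd_zero, untanglePattern_zero]
  · obtain rfl | rfl := c.eq_zero_or_eq_one <;>
      simp [roundTarget, hw0, Function.update_of_ne hne]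

end Rounds

section Circuit

variable {n t : ℕ} (idx : ℕ → Fin n)

lemma roundPrep_mem_unitaryGroup (k : ℕ) :
    roundPrep idx k ∈ unitaryGroup (QIdx n (2 * t + 1)) ℂ := by
  unfold roundPrep
  split
  · exact mul_mem (overwritePrep_mem_unitaryGroup _ _) (Equiv.Perm.permMatrix_mem_unitaryGroup _)
  · exact one_mem _

lemma roundFinish_mem_unitaryGroup (k : ℕ) :
    roundFinish idx k ∈ unitaryGroup (QIdx n (2 * t + 1)) ℂ := by
  unfold roundFinish
  split
  · exact mul_mem (Equiv.Perm.permMatrix_mem_unitaryGroup _) (overwriteFinish_mem_unitaryGroup _ _)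
  · exact one_mem _

noncomputable def untangleCircuit (i : Fin (t + 1)) :
    Matrix (QIdx n (2 * t + 1)) (QIdx n (2 * t + 1)) ℂ :=
  roundPrep idx i * if (i : ℕ) = 0 then 1 else roundFinish idx (i - 1)

lemma untangleCircuit_mem_unitaryGroup (i : Fin (t + 1)) :
    untangleCircuit idx i ∈ unitaryGroup (QIdx n (2 * t + 1)) ℂ := by
  refine mul_mem (roundPrep_mem_unitaryGroup idx _) ?_
  split
  · exact one_mem _
  · exact roundFinish_mem_unitaryGroup idx _

lemma algMat_untangleCircuit_mulVec (x : Fin n → ZMod 2) (c : ZMod 2) :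
    algMat n (2 * t + 1) x t (untangleCircuit idx) *ᵥ
        Pi.single (0, untanglePattern t idx x 0 c) 1 =
      Pi.single (0, untanglePattern t idx x t c) 1 := by
  have h := algMat_mulVec_of_rounds x (roundPrep idx) (roundFinish idx)
    (fun k => Pi.single (0, untanglePattern t idx x k c) 1) t
    fun k hk => roundFinish_oracleMat_roundPrep idx x ⟨k, hk⟩ c
  rwa [roundPrep, dif_neg (lt_irrefl t), one_mulVec] at h

end Circuit

/-- Iterated untangling: with `s = 2t` and `r : {1,…,2s} → {1,…,n}` injective,
there are unitaries `V_0, …, V_t` and a sign function `σ` mapping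
`β₀ = (1/√2)(ε e₀ ⊗ e₀ ⊗ (⊗ᵢ e_{x_{r(i)}}) + δ e₀ ⊗ e₁ ⊗ (⊗ᵢ e_{x_{r(s+i)}}))`
to `σ(x) · β_f`, an unentangled state, using `t` oracle queries. -/
theorem stmt11 (n t : ℕ) (ht : 1 ≤ t)
    (r : Fin (4 * t) → Fin n) :
    ∃ V : Fin (t + 1) → Matrix (QIdx n (2 * t + 1)) (QIdx n (2 * t + 1)) ℂ,
      (∀ i, V i ∈ Matrix.unitaryGroup (QIdx n (2 * t + 1)) ℂ) ∧
      ∃ σ : (Fin n → ZMod 2) → ℂ, (∀ x, σ x = 1 ∨ σ x = -1) ∧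
        ∀ (x : Fin n → ZMod 2) (ε δ : ℂ),
          (ε = 1 ∨ ε = -1) → (δ = 1 ∨ δ = -1) →
          (algMat n (2 * t + 1) x t V).mulVec
            ((Real.sqrt 2 : ℂ)⁻¹ •
              (ε • bv n (2 * t + 1) (0, fun j =>
                  if (j : ℕ) = 0 then 0
                  else x (r ⟨((j : ℕ) - 1) % (4 * t), Nat.mod_lt _ (by omega)⟩))
                + δ • bv n (2 * t + 1) (0, fun j =>
                  if (j : ℕ) = 0 then 1
                  else x (r ⟨(2 * t + (j : ℕ) - 1) % (4 * t), Nat.mod_lt _ (by omega)⟩))))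
          = σ x •
            ((Real.sqrt 2 : ℂ)⁻¹ •
              (ε • bv n (2 * t + 1) (0, fun j =>
                  if (j : ℕ) = 0 then 0
                  else if (j : ℕ) % 2 = 1 then
                    x (r ⟨(j : ℕ) % (4 * t), Nat.mod_lt _ (by omega)⟩)
                  else
                    x (r ⟨(2 * t + (j : ℕ) - 1) % (4 * t), Nat.mod_lt _ (by omega)⟩))
                + δ • bv n (2 * t + 1) (0, fun j =>
                  if (j : ℕ) = 0 then 1
                  else if (j : ℕ) % 2 = 1 then
                    x (r ⟨(j : ℕ) % (4 * t), Nat.mod_lt _ (by omega)⟩)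
                  else
                    x (r ⟨(2 * t + (j : ℕ) - 1) % (4 * t), Nat.mod_lt _ (by omega)⟩)))) := by
  let idx : ℕ → Fin n := fun i => r ⟨i % (4 * t), Nat.mod_lt _ (by omega)⟩
  refine ⟨untangleCircuit idx, untangleCircuit_mem_unitaryGroup idx, fun _ => 1,
    fun _ => Or.inl rfl, fun x ε δ _ _ => ?_⟩
  have h0 := algMat_untangleCircuit_mulVec (t := t) idx x 0
  have h1 := algMat_untangleCircuit_mulVec (t := t) idx x 1
  rw [untanglePattern_zero_zero, untanglePattern_self] at h0
  rw [untanglePattern_zero_one, untanglePattern_self] at h1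
  simp only [idx] at h0 h1 ⊢
  simp only [one_smul, bv_eq_single, mulVec_smul, mulVec_add, h0, h1]
end
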